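/- arXiv:0809.4874 — 10 statements merged into one kernel-verified Lean document; each statement's English description precedes it below -/
import Mathlib

section
/- Let p, q be positive integers and let V, U be complex p×q matrices with ‖V‖ < 1 and ‖U‖ ≤ 1. Then the matrix I_q − V*U is invertible, so 𝓕_V(U) is defined, and ‖𝓕_V(U)‖ ≤ 1. -/
open scoped Matrix.Norms.L2Operator ComplexOrder
open Matrix

/-- The positive semidefinite square root of a positive semidefinite matrix,
extended by `0` to all matrices. -/
noncomputable def matSqrt {n : Type*} [Fintype n] [DecidableEq n] (M : Matrix n n ℂ) :
    Matrix n n ℂ :=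
  letI := Classical.dec M.PosSemidef
  if h : M.PosSemidef then
    (h.1.eigenvectorUnitary : Matrix n n ℂ) * diagonal ((↑) ∘ (√·) ∘ h.1.eigenvalues) *
      (star h.1.eigenvectorUnitary : Matrix n n ℂ)
  else 0

/-- The linear fractional transformation
`𝓕_V(U) = V − (I − V V*)^{1/2} U (I − V* U)⁻¹ (I − V* V)^{1/2}`. -/
noncomputable def lft {p q : ℕ} (V U : Matrix (Fin p) (Fin q) ℂ) : Matrix (Fin p) (Fin q) ℂ :=
  V - matSqrt (1 - V * Vᴴ) * U * (1 - Vᴴ * U)⁻¹ * matSqrt (1 - Vᴴ * V)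

/-!
Since `‖V* U‖ < 1`, the Neumann series makes `I − V* U` invertible; write `S` for its inverse.
The defect operators `D = (I − V* V)^{1/2}` and `D_* = (I − V V*)^{1/2}` satisfy `D_* V = V D`,
because `V (I − V* V) = (I − V V*) V` and both square roots are the same polynomial (a Lagrange
interpolant of `√` on the two spectra) in these matrices. With `S = I + V* U S` this gives the
identity `I − 𝓕_V(U)* 𝓕_V(U) = (S D)* (I − U* U) (S D)`, whose right-hand side is positive
semidefinite when `‖U‖ ≤ 1`.
-/

open scoped MatrixOrder

theorem cfc_sqrt_mul_cfc_sqrt {A : Type*} [CStarAlgebra A] [PartialOrder A] [StarOrderedRing A]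
    {a : A} (ha : 0 ≤ a) : cfc Real.sqrt a * cfc Real.sqrt a = a := by
  rw [← cfcₙ_eq_cfc, ← CFC.sqrt_eq_real_sqrt a ha, CFC.sqrt_mul_sqrt_self a ha]

namespace Matrix

variable {m n : Type*} [Fintype m] [Fintype n] [DecidableEq n]

theorem mul_aeval_eq_aeval_mul [DecidableEq m] {R α : Type*} [CommSemiring R] [CommSemiring α] [Algebra R α]
    {V : Matrix m n α} {A : Matrix n n α} {B : Matrix m m α} (h : V * A = B * V)
    (g : Polynomial R) : V * Polynomial.aeval A g = Polynomial.aeval B g * V := by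
  have hpow (k : ℕ) : V * A ^ k = B ^ k * V := by
    induction k with
    | zero => simp
    | succ k ih =>
      rw [pow_succ, pow_succ, ← Matrix.mul_assoc, ih, Matrix.mul_assoc, h, Matrix.mul_assoc]
  induction g using Polynomial.induction_on' with
  | add g₁ g₂ h₁ h₂ => rw [map_add, map_add, Matrix.mul_add, Matrix.add_mul, h₁, h₂]
  | monomial k a =>
    simp only [Polynomial.aeval_monomial, Algebra.algebraMap_eq_smul_one, smul_mul_assoc,
      one_mul, Matrix.mul_smul, Matrix.smul_mul, hpow]

theorem mul_cfc_eq_cfc_mul [DecidableEq m] {𝕜 : Type*} [RCLike 𝕜] {V : Matrix m n 𝕜} {A : Matrix n n 𝕜}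
    {B : Matrix m m 𝕜} (hA : A.IsHermitian) (hB : B.IsHermitian) (h : V * A = B * V)
    (f : ℝ → ℝ) : V * cfc f A = cfc f B * V := by
  set s := (A.finite_real_spectrum.union B.finite_real_spectrum).toFinset
  set g := Lagrange.interpolate s id f
  have hg : Set.EqOn f (fun x => g.eval x) (spectrum ℝ A ∪ spectrum ℝ B) := fun x hx =>
    (Lagrange.eval_interpolate_at_node f Function.injective_id.injOn (by simpa [s] using hx)).symm
  rw [cfc_congr (hg.mono Set.subset_union_left), cfc_congr (hg.mono Set.subset_union_right),
    cfc_polynomial g A hA.isSelfAdjoint, cfc_polynomial g B hB.isSelfAdjoint]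
  exact mul_aeval_eq_aeval_mul h g

theorem l2_opNorm_le_one_iff_posSemidef (W : Matrix m n ℂ) :
    ‖W‖ ≤ 1 ↔ (1 - Wᴴ * W).PosSemidef := by
  rw [← le_iff, ← CStarAlgebra.norm_le_one_iff_of_nonneg _
      (posSemidef_conjTranspose_mul_self W).nonneg,
    l2_opNorm_conjTranspose_mul_self, ← abs_le_one_iff_mul_self_le_one, abs_norm]

theorem one_sub_conjTranspose_mul_self_sub_mul [DecidableEq m] {α : Type*} [CommRing α] [StarRing α]
    {V U : Matrix m n α} {P : Matrix m m α} {R S : Matrix n n α} (hP : P.IsHermitian)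
    (hR : R.IsHermitian) (hPV : P * V = V * R) (hP2 : P * P = 1 - V * Vᴴ)
    (hR2 : R * R = 1 - Vᴴ * V) (hS : (1 - Vᴴ * U) * S = 1) :
    1 - (V - P * U * S * R)ᴴ * (V - P * U * S * R) = (S * R)ᴴ * (1 - Uᴴ * U) * (S * R) := by
  set X := P * U * S * R
  obtain ⟨A, hA⟩ : ∃ A, Vᴴ * U * S = A := ⟨_, rfl⟩
  have hSA : S = 1 + A := by
    rw [Matrix.sub_mul, Matrix.one_mul] at hS
    rw [← hS, hA]
    abel
  have hVX : Vᴴ * X = R * A * R := by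
    have hVP : Vᴴ * P = R * Vᴴ := by
      simpa only [conjTranspose_mul, hP.eq, hR.eq] using congrArg conjTranspose hPV
    simp only [X, ← hA, ← Matrix.mul_assoc, hVP]
  have hXV : Xᴴ * V = R * Aᴴ * R := by
    simpa only [conjTranspose_mul, conjTranspose_conjTranspose, hR.eq, Matrix.mul_assoc]
      using congrArg conjTranspose hVX
  have hXX : Xᴴ * X = R * Sᴴ * (Uᴴ * U) * S * R - R * Aᴴ * A * R :=
    calc Xᴴ * X = R * Sᴴ * Uᴴ * (P * P) * U * S * R := by
          simp only [X, conjTranspose_mul, hP.eq, hR.eq, Matrix.mul_assoc]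
      _ = _ := by
          simp only [← hA, hP2, conjTranspose_mul, conjTranspose_conjTranspose, Matrix.mul_sub,
            Matrix.sub_mul, Matrix.mul_one, Matrix.mul_assoc]
  calc 1 - (V - X)ᴴ * (V - X) = (1 - Vᴴ * V) + Vᴴ * X + Xᴴ * V - Xᴴ * X := by
        simp only [conjTranspose_sub, Matrix.sub_mul, Matrix.mul_sub]
        abel
    _ = R * R + R * A * R + R * Aᴴ * R - (R * Sᴴ * (Uᴴ * U) * S * R - R * Aᴴ * A * R) := by
        rw [hR2, hVX, hXV, hXX]
    _ = (S * R)ᴴ * (1 - Uᴴ * U) * (S * R) := by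
        rw [conjTranspose_mul, hR.eq, hSA, conjTranspose_add, conjTranspose_one]
        noncomm_ring

end Matrix

theorem matSqrt_eq_cfc {n : Type*} [Fintype n] [DecidableEq n] {M : Matrix n n ℂ}
    (hM : M.PosSemidef) : matSqrt M = cfc Real.sqrt M := by
  rw [matSqrt, dif_pos hM, hM.1.cfc_eq, IsHermitian.cfc, Unitary.conjStarAlgAut_apply]
  rfl

theorem lft_wellDefined_and_contractive_general {p q : ℕ}
    (V U : Matrix (Fin p) (Fin q) ℂ) (hV : ‖V‖ < 1) (hU : ‖U‖ ≤ 1) :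
    IsUnit (1 - Vᴴ * U) ∧ ‖lft V U‖ ≤ 1 := by
  have hunit : IsUnit (1 - Vᴴ * U) := isUnit_one_sub_of_norm_lt_one <|
    calc ‖Vᴴ * U‖ ≤ ‖V‖ * ‖U‖ := l2_opNorm_conjTranspose V ▸ l2_opNorm_mul _ _
      _ < 1 := by nlinarith [norm_nonneg V, norm_nonneg U]
  refine ⟨hunit, ?_⟩
  have hR : (1 - Vᴴ * V).PosSemidef := (l2_opNorm_le_one_iff_posSemidef V).mp hV.le
  have hP : (1 - V * Vᴴ).PosSemidef := by
    simpa using (l2_opNorm_le_one_iff_posSemidef Vᴴ).mp ((l2_opNorm_conjTranspose V).symm ▸ hV.le)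
  have hcomm : V * (1 - Vᴴ * V) = (1 - V * Vᴴ) * V := by
    simp only [Matrix.mul_sub, Matrix.sub_mul, Matrix.mul_one, Matrix.one_mul, Matrix.mul_assoc]
  rw [l2_opNorm_le_one_iff_posSemidef, lft, matSqrt_eq_cfc hP, matSqrt_eq_cfc hR,
    one_sub_conjTranspose_mul_self_sub_mul IsSelfAdjoint.cfc.isHermitian
      IsSelfAdjoint.cfc.isHermitian (mul_cfc_eq_cfc_mul hR.1 hP.1 hcomm _).symm
      (cfc_sqrt_mul_cfc_sqrt hP.nonneg) (cfc_sqrt_mul_cfc_sqrt hR.nonneg)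
      (mul_nonsing_inv _ ((isUnit_iff_isUnit_det _).mp hunit))]
  exact ((l2_opNorm_le_one_iff_posSemidef U).mp hU).conjTranspose_mul_mul_same _

/-- If `‖V‖ < 1` and `‖U‖ ≤ 1`, then `I − V*U` is invertible and `‖𝓕_V(U)‖ ≤ 1`. -/
theorem lft_wellDefined_and_contractive {p q : ℕ} (hp : 0 < p) (hq : 0 < q)
    (V U : Matrix (Fin p) (Fin q) ℂ) (hV : ‖V‖ < 1) (hU : ‖U‖ ≤ 1) :
    IsUnit (1 - Vᴴ * U) ∧ ‖lft V U‖ ≤ 1 :=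
  lft_wellDefined_and_contractive_general V U hV hU
end

section
/- Let V, U be complex p×q matrices with ‖V‖ < 1 and ‖U‖ ≤ 1. Then I_q − V*𝓕_V(U) is invertible and 𝓕_V(𝓕_V(U)) = U; that is, 𝓕_V is an involution of the closed unit ball of p×q matrices. -/
open scoped Matrix.Norms.L2Operator ComplexOrder
open Matrix
open scoped MatrixOrder

/-! Write `A = (1 - V Vᴴ)^{1/2}` and `B = (1 - Vᴴ V)^{1/2}`. The computation only uses
`A² = 1 - V Vᴴ`, `B² = 1 - Vᴴ V`, the intertwining relations `A V = V B` and `Vᴴ A = B Vᴴ`, and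
the invertibility of `B`. With these,
`1 - Vᴴ 𝓕_V(U) = B (1 - Vᴴ U)⁻¹ B`, and substituting this into `𝓕_V(𝓕_V(U))` collapses it to `U`.
The intertwining holds because `diag(1 - V Vᴴ, 1 - Vᴴ V)` commutes with the block matrix
`[[0, V], [0, 0]]`, hence so does its square root `diag(A, B)`. -/

open scoped MatrixOrder

section SquareRoot

variable {m n : Type*} [Fintype m] [DecidableEq m] [Fintype n] [DecidableEq n]

lemma matSqrt_eq_sqrt {M : Matrix n n ℂ} (hM : 0 ≤ M) : matSqrt M = CFC.sqrt M := by
  have hM' : M.PosSemidef := nonneg_iff_posSemidef.mp hM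
  rw [matSqrt, dif_pos hM', CFC.sqrt_eq_cfc, cfc_nnreal_eq_real _ M, hM'.1.cfc_eq]
  simp only [IsHermitian.cfc, Function.comp_def, Real.coe_sqrt, Real.coe_toNNReal',
    max_eq_left (hM'.eigenvalues_nonneg _), Unitary.conjStarAlgAut_apply]
  rfl

lemma matSqrt_mul_self {M : Matrix n n ℂ} (hM : 0 ≤ M) : matSqrt M * matSqrt M = M := by
  rw [matSqrt_eq_sqrt hM]; exact CFC.sqrt_mul_sqrt_self M

lemma fromBlocks_zero_zero_nonneg {A : Matrix m m ℂ} {B : Matrix n n ℂ} (hA : 0 ≤ A)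
    (hB : 0 ≤ B) : 0 ≤ fromBlocks A 0 0 B := by
  have hsA : (CFC.sqrt A)ᴴ = CFC.sqrt A := (CFC.sqrt_nonneg A).isSelfAdjoint
  have hsB : (CFC.sqrt B)ᴴ = CFC.sqrt B := (CFC.sqrt_nonneg B).isSelfAdjoint
  have h : fromBlocks A 0 0 B = star (fromBlocks (CFC.sqrt A) 0 0 (CFC.sqrt B)) *
      fromBlocks (CFC.sqrt A) 0 0 (CFC.sqrt B) := by
    simp [star_eq_conjTranspose, fromBlocks_conjTranspose, fromBlocks_multiply, hsA, hsB,
      CFC.sqrt_mul_sqrt_self A, CFC.sqrt_mul_sqrt_self B]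
  rw [h]; exact star_mul_self_nonneg _

lemma sqrt_fromBlocks_zero_zero {A : Matrix m m ℂ} {B : Matrix n n ℂ} (hA : 0 ≤ A)
    (hB : 0 ≤ B) :
    CFC.sqrt (fromBlocks A 0 0 B) = fromBlocks (CFC.sqrt A) 0 0 (CFC.sqrt B) :=
  CFC.sqrt_unique
    (by simp [fromBlocks_multiply, CFC.sqrt_mul_sqrt_self A, CFC.sqrt_mul_sqrt_self B])
    (fromBlocks_zero_zero_nonneg (CFC.sqrt_nonneg A) (CFC.sqrt_nonneg B))

lemma sqrt_mul_eq_mul_sqrt {M : Matrix m m ℂ} {N : Matrix n n ℂ} (hM : 0 ≤ M) (hN : 0 ≤ N)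
    {X : Matrix m n ℂ} (h : M * X = X * N) : CFC.sqrt M * X = X * CFC.sqrt N := by
  have hcomm : Commute (fromBlocks M 0 0 N) (fromBlocks 0 X 0 0) := by
    simp [Commute, SemiconjBy, fromBlocks_multiply, h]
  have hsqrt : Commute (CFC.sqrt (fromBlocks M 0 0 N)) (fromBlocks 0 X 0 0) := by
    rw [CFC.sqrt_eq_cfc]; exact hcomm.cfc_nnreal NNReal.sqrt
  have := congr_arg toBlocks₁₂ hsqrt.eq
  simpa [sqrt_fromBlocks_zero_zero hM hN, fromBlocks_multiply] using this

end SquareRoot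

section Contraction

variable {m n : Type*} [Fintype m] [Fintype n] [DecidableEq n]

lemma one_sub_conjTranspose_mul_self_nonneg {V : Matrix m n ℂ} (hV : ‖V‖ ≤ 1) :
    0 ≤ 1 - Vᴴ * V := by
  have hle : Vᴴ * V ≤ algebraMap ℝ _ ‖Vᴴ * V‖ :=
    IsSelfAdjoint.le_algebraMap_norm_self (isHermitian_conjTranspose_mul_self V)
  have hnorm : ‖Vᴴ * V‖ ≤ 1 := by
    rw [l2_opNorm_conjTranspose_mul_self]; exact mul_le_one₀ hV (norm_nonneg V) hV
  rw [sub_nonneg]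
  exact hle.trans (by simpa using algebraMap_mono (Matrix n n ℂ) hnorm)

lemma one_sub_mul_conjTranspose_self_nonneg [DecidableEq m] {V : Matrix m n ℂ}
    (hV : ‖V‖ ≤ 1) :
    0 ≤ 1 - V * Vᴴ := by
  simpa using one_sub_conjTranspose_mul_self_nonneg (V := Vᴴ) (by rwa [l2_opNorm_conjTranspose])

lemma isUnit_one_sub_conjTranspose_mul [DecidableEq m] {V U : Matrix m n ℂ} (hV : ‖V‖ < 1)
    (hU : ‖U‖ ≤ 1) :
    IsUnit (1 - Vᴴ * U) := by
  refine isUnit_one_sub_of_norm_lt_one ?_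
  calc ‖Vᴴ * U‖ ≤ ‖Vᴴ‖ * ‖U‖ := l2_opNorm_mul Vᴴ U
    _ ≤ ‖Vᴴ‖ := mul_le_of_le_one_right (norm_nonneg _) hU
    _ < 1 := by rwa [l2_opNorm_conjTranspose]

end Contraction

section Algebra

variable {R m n : Type*} [CommRing R] [Fintype m] [Fintype n] [DecidableEq n]

noncomputable def lftOfDefects (A : Matrix m m R) (B : Matrix n n R) (V : Matrix m n R)
    (W : Matrix n m R) (U : Matrix m n R) : Matrix m n R :=
  V - A * U * (1 - W * U)⁻¹ * B

lemma one_sub_mul_mul_eq_mul_one_sub_mul [DecidableEq m] (V : Matrix m n R) (W : Matrix n m R) :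
    (1 - V * W) * V = V * (1 - W * V) := by
  simp only [Matrix.sub_mul, Matrix.mul_sub, Matrix.one_mul, Matrix.mul_one, Matrix.mul_assoc]

variable {A : Matrix m m R} {B : Matrix n n R} {V U : Matrix m n R} {W : Matrix n m R}

lemma one_sub_mul_lftOfDefects (hB : B * B = 1 - W * V) (hWA : W * A = B * W)
    (hU : IsUnit (1 - W * U)) :
    1 - W * lftOfDefects A B V W U = B * (1 - W * U)⁻¹ * B := by
  have hTinv : 1 + W * U * (1 - W * U)⁻¹ = (1 - W * U)⁻¹ := by
    calc 1 + W * U * (1 - W * U)⁻¹ = ((1 - W * U) + W * U) * (1 - W * U)⁻¹ := by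
          rw [add_mul, mul_nonsing_inv _ ((isUnit_iff_isUnit_det _).mp hU)]
      _ = (1 - W * U)⁻¹ := by rw [sub_add_cancel, Matrix.one_mul]
  calc 1 - W * lftOfDefects A B V W U = B * B + B * (W * U * (1 - W * U)⁻¹) * B := by
        simp only [lftOfDefects, Matrix.mul_sub, ← Matrix.mul_assoc, hWA, hB]; abel
    _ = B * (1 + W * U * (1 - W * U)⁻¹) * B := by noncomm_ring
    _ = B * (1 - W * U)⁻¹ * B := by rw [hTinv]

lemma lftOfDefects_lftOfDefects [DecidableEq m] (hA : A * A = 1 - V * W)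
    (hB : B * B = 1 - W * V) (hAV : A * V = V * B) (hWA : W * A = B * W) (hBu : IsUnit B)
    (hU : IsUnit (1 - W * U)) :
    lftOfDefects A B V W (lftOfDefects A B V W U) = U := by
  set F := lftOfDefects A B V W U
  have hB' := (isUnit_iff_isUnit_det B).mp hBu
  have hU' := (isUnit_iff_isUnit_det _).mp hU
  have hFB : A * F * B⁻¹ = V - (1 - V * W) * U * (1 - W * U)⁻¹ := by
    simp only [F, lftOfDefects, Matrix.mul_sub, Matrix.sub_mul, ← Matrix.mul_assoc, hA, hAV]
    simp only [Matrix.mul_assoc, mul_nonsing_inv B hB', Matrix.mul_one]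
  calc lftOfDefects A B V W F = V - A * F * (B⁻¹ * (1 - W * U) * B⁻¹) * B := by
        rw [lftOfDefects, one_sub_mul_lftOfDefects hB hWA hU, Matrix.mul_inv_rev,
          Matrix.mul_inv_rev, nonsing_inv_nonsing_inv _ hU', Matrix.mul_assoc B⁻¹]
    _ = V - (A * F * B⁻¹) * (1 - W * U) := by
        simp only [Matrix.mul_assoc, nonsing_inv_mul B hB', Matrix.mul_one]
    _ = U := by
        rw [hFB, Matrix.sub_mul, Matrix.mul_assoc _ (1 - W * U)⁻¹, nonsing_inv_mul _ hU',
          Matrix.mul_one]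
        simp only [Matrix.mul_sub, Matrix.sub_mul, Matrix.mul_one, Matrix.one_mul,
          Matrix.mul_assoc]
        abel

end Algebra

/-- `𝓕_V` is an involution on the closed unit ball: `I − V*𝓕_V(U)` is invertible and
`𝓕_V(𝓕_V(U)) = U`. -/
theorem lft_involutive {p q : ℕ} (V U : Matrix (Fin p) (Fin q) ℂ)
    (hV : ‖V‖ < 1) (hU : ‖U‖ ≤ 1) :
    IsUnit (1 - Vᴴ * lft V U) ∧ lft V (lft V U) = U := by
  have hM : 0 ≤ 1 - V * Vᴴ := one_sub_mul_conjTranspose_self_nonneg hV.le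
  have hN : 0 ≤ 1 - Vᴴ * V := one_sub_conjTranspose_mul_self_nonneg hV.le
  have hAV : matSqrt (1 - V * Vᴴ) * V = V * matSqrt (1 - Vᴴ * V) := by
    rw [matSqrt_eq_sqrt hM, matSqrt_eq_sqrt hN]
    exact sqrt_mul_eq_mul_sqrt hM hN (one_sub_mul_mul_eq_mul_one_sub_mul V Vᴴ)
  have hVA : Vᴴ * matSqrt (1 - V * Vᴴ) = matSqrt (1 - Vᴴ * V) * Vᴴ := by
    rw [matSqrt_eq_sqrt hM, matSqrt_eq_sqrt hN]
    exact (sqrt_mul_eq_mul_sqrt hN hM (one_sub_mul_mul_eq_mul_one_sub_mul Vᴴ V)).symm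
  have hB : IsUnit (matSqrt (1 - Vᴴ * V)) := by
    refine isUnit_of_mul_isUnit_left (y := matSqrt (1 - Vᴴ * V)) ?_
    rw [matSqrt_mul_self hN]
    exact isUnit_one_sub_conjTranspose_mul hV hV.le
  have hR := isUnit_one_sub_conjTranspose_mul hV hU
  refine ⟨?_,
    lftOfDefects_lftOfDefects (matSqrt_mul_self hM) (matSqrt_mul_self hN) hAV hVA hB hR⟩
  rw [lft, ← lftOfDefects, one_sub_mul_lftOfDefects (matSqrt_mul_self hN) hVA hR]
  exact (hB.mul (isUnit_nonsing_inv_iff.mpr hR)).mul hB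
end

section
/- Let ψ: ℂ^{g'×g} → ℂ^{d'×d} be a completely contractive linear mapping, and set A_{jℓ} := ψ(E_{jℓ}) ∈ ℂ^{d'×d}. Then the formal block transpose of the array A = (A_{jℓ}), namely the g×g' block matrix in ℂ^{gd'×g'd} whose (ℓ,j) block equals A_{jℓ}, has operator norm at most 1. -/
/-!
Embed `Fin g` and `Fin g'` into `Fin n` by injections `ι`, `ι'` and take the array of matrix
units `X_{jℓ} = E_{ι ℓ, ι' j}`. Viewed as one matrix, `X` has at most one entry `1` in each row
and column, so `‖X‖ ≤ 1`; while `ψ_n(X)` contains the block transpose of `A` as the submatrix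
on the rows `(ι ℓ, ·)` and the columns `(ι' j, ·)`. Passing to a submatrix does not increase the
operator norm.
-/

open scoped Matrix.Norms.L2Operator Kronecker
open Matrix

/-- The identification of a `g'×g` array `X` of `n×n` matrices with the matrix
`Σ_{j,ℓ} X_{jℓ} ⊗ E_{jℓ} ∈ ℂ^{ng'×ng}`. -/
noncomputable def arrayToMatrix {g' g n : ℕ} (X : Fin g' → Fin g → Matrix (Fin n) (Fin n) ℂ) :
    Matrix (Fin n × Fin g') (Fin n × Fin g) ℂ :=
  ∑ j, ∑ ℓ, X j ℓ ⊗ₖ Matrix.single j ℓ (1 : ℂ)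

/-- The `n`-th ampliation `ψ_n(X) = Σ_{j,ℓ} X_{jℓ} ⊗ ψ(E_{jℓ})` of a linear map
`ψ : ℂ^{g'×g} → ℂ^{d'×d}`. -/
noncomputable def ampliation {g' g d' d : ℕ}
    (ψ : Matrix (Fin g') (Fin g) ℂ →ₗ[ℂ] Matrix (Fin d') (Fin d) ℂ) {n : ℕ}
    (X : Fin g' → Fin g → Matrix (Fin n) (Fin n) ℂ) :
    Matrix (Fin n × Fin d') (Fin n × Fin d) ℂ :=
  ∑ j, ∑ ℓ, X j ℓ ⊗ₖ ψ (Matrix.single j ℓ (1 : ℂ))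

/-- A linear map `ψ : ℂ^{g'×g} → ℂ^{d'×d}` is completely contractive if
`‖ψ_n(X)‖ ≤ ‖X‖` for all `n` and all arrays `X` of `n×n` matrices. -/
def CompletelyContractive {g' g d' d : ℕ}
    (ψ : Matrix (Fin g') (Fin g) ℂ →ₗ[ℂ] Matrix (Fin d') (Fin d) ℂ) : Prop :=
  ∀ (n : ℕ) (X : Fin g' → Fin g → Matrix (Fin n) (Fin n) ℂ),
    ‖ampliation ψ X‖ ≤ ‖arrayToMatrix X‖

/-- A linear map `ψ : ℂ^{g'×g} → ℂ^{d'×d}` is completely isometric if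
`‖ψ_n(X)‖ = ‖X‖` for all `n` and all arrays `X` of `n×n` matrices. -/
def CompletelyIsometric {g' g d' d : ℕ}
    (ψ : Matrix (Fin g') (Fin g) ℂ →ₗ[ℂ] Matrix (Fin d') (Fin d) ℂ) : Prop :=
  ∀ (n : ℕ) (X : Fin g' → Fin g → Matrix (Fin n) (Fin n) ℂ),
    ‖ampliation ψ X‖ = ‖arrayToMatrix X‖

namespace Matrix

variable {𝕜 : Type*} [RCLike 𝕜] {l m n o : Type*} [Fintype l] [Fintype m] [Fintype n]
  [Fintype o] [DecidableEq l] [DecidableEq m] [DecidableEq n] [DecidableEq o]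

lemma l2_opNorm_one_le : ‖(1 : Matrix n n 𝕜)‖ ≤ 1 := by
  simpa using permMatrix_l2_opNorm_le (𝕜 := 𝕜) (1 : Equiv.Perm n)

lemma l2_opNorm_one_submatrix_id_right_le {f : l → m} (hf : f.Injective) :
    ‖(1 : Matrix m m 𝕜).submatrix f id‖ ≤ 1 := by
  set P := (1 : Matrix m m 𝕜).submatrix f id
  have hPP : Pᴴᴴ * Pᴴ = 1 := by
    rw [conjTranspose_conjTranspose, conjTranspose_submatrix, conjTranspose_one,
      ← submatrix_mul _ _ _ _ _ Function.bijective_id, Matrix.one_mul, submatrix_one _ hf]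
  have h := l2_opNorm_conjTranspose_mul_self Pᴴ
  rw [hPP, l2_opNorm_conjTranspose] at h
  nlinarith [norm_nonneg P, l2_opNorm_one_le (𝕜 := 𝕜) (n := l)]

lemma l2_opNorm_one_submatrix_id_left_le {f : l → m} (hf : f.Injective) :
    ‖(1 : Matrix m m 𝕜).submatrix id f‖ ≤ 1 := by
  rw [← l2_opNorm_conjTranspose, conjTranspose_submatrix, conjTranspose_one]
  exact l2_opNorm_one_submatrix_id_right_le hf

lemma l2_opNorm_submatrix_le (M : Matrix m n 𝕜) {f : l → m} {g : o → n} (hf : f.Injective)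
    (hg : g.Injective) : ‖M.submatrix f g‖ ≤ ‖M‖ := by
  have hfac : M.submatrix f g =
      (1 : Matrix m m 𝕜).submatrix f id * M * (1 : Matrix n n 𝕜).submatrix id g := by
    conv_lhs => rw [← Matrix.one_mul M, ← Matrix.mul_one (1 * M)]
    rw [submatrix_mul _ _ f id g Function.bijective_id,
      submatrix_mul _ _ f id id Function.bijective_id, submatrix_id_id]
  calc ‖M.submatrix f g‖
      ≤ ‖(1 : Matrix m m 𝕜).submatrix f id‖ * ‖M‖ * ‖(1 : Matrix n n 𝕜).submatrix id g‖ := by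
        rw [hfac]
        exact (l2_opNorm_mul _ _).trans (by gcongr; exact l2_opNorm_mul _ _)
    _ ≤ 1 * ‖M‖ * 1 := by
        gcongr
        exacts [l2_opNorm_one_submatrix_id_right_le hf, l2_opNorm_one_submatrix_id_left_le hg]
    _ = ‖M‖ := by ring

end Matrix

section BlockTranspose

variable {g' g d' d n : ℕ}

lemma arrayToMatrix_apply (X : Fin g' → Fin g → Matrix (Fin n) (Fin n) ℂ) (a b : Fin n)
    (j : Fin g') (ℓ : Fin g) : arrayToMatrix X (a, j) (b, ℓ) = X j ℓ a b := by
  simp [arrayToMatrix, Matrix.sum_apply, single_apply, ite_and]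

lemma ampliation_apply (ψ : Matrix (Fin g') (Fin g) ℂ →ₗ[ℂ] Matrix (Fin d') (Fin d) ℂ)
    (X : Fin g' → Fin g → Matrix (Fin n) (Fin n) ℂ) (a b : Fin n) (p : Fin d') (q : Fin d) :
    ampliation ψ X (a, p) (b, q) = ∑ j, ∑ ℓ, X j ℓ a b * ψ (single j ℓ 1) p q := by
  simp [ampliation, Matrix.sum_apply]

noncomputable def transposeArray (ι : Fin g → Fin n) (ι' : Fin g' → Fin n) :
    Fin g' → Fin g → Matrix (Fin n) (Fin n) ℂ :=
  fun j ℓ => single (ι ℓ) (ι' j) 1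

variable {ι : Fin g → Fin n} {ι' : Fin g' → Fin n}

lemma arrayToMatrix_transposeArray :
    arrayToMatrix (transposeArray ι ι') = (1 : Matrix (Fin n × Fin n) (Fin n × Fin n) ℂ).submatrix
      (Prod.map id ι') (Prod.swap ∘ Prod.map id ι) := by
  ext ⟨a, j⟩ ⟨b, ℓ⟩
  simp [arrayToMatrix_apply, transposeArray, single_apply, one_apply, eq_comm]

lemma norm_arrayToMatrix_transposeArray_le (hι : ι.Injective) (hι' : ι'.Injective) :
    ‖arrayToMatrix (transposeArray ι ι')‖ ≤ 1 := by
  rw [arrayToMatrix_transposeArray]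
  exact (l2_opNorm_submatrix_le _ (Function.injective_id.prodMap hι')
    (Prod.swap_injective.comp (Function.injective_id.prodMap hι))).trans l2_opNorm_one_le

lemma ampliation_transposeArray_submatrix
    (ψ : Matrix (Fin g') (Fin g) ℂ →ₗ[ℂ] Matrix (Fin d') (Fin d) ℂ)
    (hι : ι.Injective) (hι' : ι'.Injective) :
    (ampliation ψ (transposeArray ι ι')).submatrix (Prod.map ι id) (Prod.map ι' id) =
      of fun (p : Fin g × Fin d') (q : Fin g' × Fin d) => ψ (single q.1 p.1 1) p.2 q.2 := by
  ext ⟨ℓ, p⟩ ⟨j, q⟩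
  simp [ampliation_apply, transposeArray, single_apply, hι.eq_iff, hι'.eq_iff, ite_and]

end BlockTranspose

/-- If `ψ : ℂ^{g'×g} → ℂ^{d'×d}` is completely contractive and `A_{jℓ} = ψ(E_{jℓ})`,
then the formal block transpose of the array `A`, i.e. the `g×g'` block matrix whose
`(ℓ,j)` block is `A_{jℓ}`, is a contraction. -/
theorem blockTranspose_contraction_of_completelyContractive {g' g d' d : ℕ}
    (ψ : Matrix (Fin g') (Fin g) ℂ →ₗ[ℂ] Matrix (Fin d') (Fin d) ℂ)
    (hψ : CompletelyContractive ψ) :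
    ‖(Matrix.of fun (p : Fin g × Fin d') (q : Fin g' × Fin d) =>
        ψ (Matrix.single q.1 p.1 (1 : ℂ)) p.2 q.2)‖ ≤ 1 := by
  have hι : (Fin.castAdd g' : Fin g → Fin (g + g')).Injective := Fin.castAdd_injective g g'
  have hι' : (Fin.natAdd g : Fin g' → Fin (g + g')).Injective := Fin.natAdd_injective g' g
  rw [← ampliation_transposeArray_submatrix ψ hι hι']
  calc _ ≤ ‖ampliation ψ (transposeArray _ _)‖ :=
        l2_opNorm_submatrix_le _ (hι.prodMap Function.injective_id)
          (hι'.prodMap Function.injective_id)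
    _ ≤ ‖arrayToMatrix (transposeArray _ _)‖ := hψ _ _
    _ ≤ 1 := norm_arrayToMatrix_transposeArray_le hι hι'
end

section
/- Let d' ≥ g' and d ≥ g, and suppose the linear map Σ: ℂ^{g'×g} → ℂ^{d'×d} has the block form Σ(x) = [[x, σ₁(x)], [σ₂(x), σ₃(x)]], where the upper-left g'×g block of Σ(x) equals x itself and σ₁, σ₂, σ₃ are linear maps into ℂ^{g'×(d−g)}, ℂ^{(d'−g')×g}, ℂ^{(d'−g')×(d−g)} respectively. If Σ is completely contractive, then σ₁ = 0 and σ₂ = 0. -/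
open scoped Matrix.Norms.L2Operator Kronecker
open Matrix

/-!
Level one of complete contractivity already gives `‖Σ x‖ ≤ ‖x‖`. For a rank-one `x = u w*` the
vector `w` attains the norm of `x`, so by Pythagoras `Σ x` maps `w ⊕ 0` into the first block of
coordinates: `σ₂ (u w*) w = 0`. The map `(v, w) ↦ σ₂ (u v*) w` is sesquilinear and vanishes on the
diagonal, so by complex polarization it vanishes identically; rank-one matrices span, hence
`σ₂ = 0`. Taking adjoints exchanges the roles of `σ₁` and `σ₂`.
-/

open WithLp

theorem LinearMap.eq_zero_of_apply_self_eq_zero {M E : Type*} [AddCommGroup M] [Module ℂ M]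
    [AddCommGroup E] [Module ℂ E] {B : M →ₗ⋆[ℂ] M →ₗ[ℂ] E} (hB : ∀ v, B v v = 0) : B = 0 := by
  ext v w
  have hpol (c : ℂ) : c • B v w + (starRingEnd ℂ c) • B w v = 0 := by
    simpa [hB] using hB (v + c • w)
  have h1 := hpol 1
  have hI := hpol Complex.I
  simp only [map_one, one_smul, Complex.conj_I, neg_smul] at h1 hI
  have : (2 * Complex.I) • B v w = 0 := by
    rw [mul_smul, two_smul]
    linear_combination (norm := module) hI + Complex.I • h1
  simpa using this

namespace Matrix

section RCLike

variable {𝕜 : Type*} [RCLike 𝕜] {m n p q : Type*} [Fintype m] [Fintype n] [Fintype p] [Fintype q]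

lemma norm_toLp_comp_equiv (e : m ≃ n) (v : n → 𝕜) : ‖toLp 2 (v ∘ e)‖ = ‖toLp 2 v‖ := by
  simp only [EuclideanSpace.norm_eq, Function.comp_apply, e.sum_comp (fun i => ‖v i‖ ^ 2)]

lemma norm_toLp_sumElim_sq (v : m → 𝕜) (w : n → 𝕜) :
    ‖toLp 2 (Sum.elim v w)‖ ^ 2 = ‖toLp 2 v‖ ^ 2 + ‖toLp 2 w‖ ^ 2 := by
  simp only [EuclideanSpace.norm_sq_eq, Fintype.sum_sum_type, Sum.elim_inl, Sum.elim_inr]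

lemma l2_opNorm_reindex_le [DecidableEq n] [DecidableEq q] (e : m ≃ p) (f : n ≃ q)
    (M : Matrix m n 𝕜) : ‖reindex e f M‖ ≤ ‖M‖ := by
  rw [l2_opNorm_def]
  refine ContinuousLinearMap.opNorm_le_bound _ (norm_nonneg M) fun y => ?_
  have := l2_opNorm_mulVec M (toLp 2 (y.ofLp ∘ f))
  rw [norm_toLp_comp_equiv] at this
  simpa [toLpLin_apply, reindex_apply, submatrix_mulVec_equiv,
    ← norm_toLp_comp_equiv e.symm (M *ᵥ _)] using this

lemma l2_opNorm_reindex [DecidableEq m] [DecidableEq n] [DecidableEq p] [DecidableEq q]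
    (e : m ≃ p) (f : n ≃ q) (M : Matrix m n 𝕜) : ‖reindex e f M‖ = ‖M‖ :=
  (l2_opNorm_reindex_le e f M).antisymm <| by
    simpa using l2_opNorm_reindex_le e.symm f.symm (reindex e f M)

lemma l2_opNorm_vecMulVec_star [DecidableEq n] (u : m → 𝕜) (w : n → 𝕜) :
    ‖vecMulVec u (star w)‖ = ‖toLp 2 u‖ * ‖toLp 2 w‖ := by
  rw [← InnerProductSpace.norm_rankOne (𝕜 := 𝕜) (toLp 2 u) (toLp 2 w),
    ← InnerProductSpace.symm_toEuclideanLin_rankOne,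
    l2_opNorm_def, LinearEquiv.trans_apply, LinearEquiv.apply_symm_apply]
  rfl

lemma norm_vecMulVec_star_mulVec_self [DecidableEq n] (u : m → 𝕜) (w : n → 𝕜) :
    ‖toLp 2 (vecMulVec u (star w) *ᵥ w)‖ = ‖vecMulVec u (star w)‖ * ‖toLp 2 w‖ := by
  have hdot : star w ⬝ᵥ w = (‖toLp 2 w‖ ^ 2 : 𝕜) := by
    rw [dotProduct_comm, ← inner_self_eq_norm_sq_to_K]
    exact (EuclideanSpace.inner_eq_star_dotProduct (toLp 2 w) (toLp 2 w)).symm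
  rw [vecMulVec_mulVec, l2_opNorm_vecMulVec_star, hdot, op_smul_eq_smul, toLp_smul, norm_smul]
  simp only [norm_pow, RCLike.norm_ofReal, abs_norm]
  ring

lemma mulVec_eq_zero_of_norm_fromBlocks_le [DecidableEq n] [DecidableEq q]
    {A : Matrix m n 𝕜} {B : Matrix m q 𝕜} {C : Matrix p n 𝕜} {D : Matrix p q 𝕜} {w : n → 𝕜}
    (hM : ‖fromBlocks A B C D‖ ≤ ‖A‖) (hw : ‖A‖ * ‖toLp 2 w‖ ≤ ‖toLp 2 (A *ᵥ w)‖) :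
    C *ᵥ w = 0 := by
  have hmulVec : fromBlocks A B C D *ᵥ Sum.elim w 0 = Sum.elim (A *ᵥ w) (C *ᵥ w) := by
    simp [fromBlocks_mulVec]
  have hbound := l2_opNorm_mulVec (fromBlocks A B C D) (toLp 2 (Sum.elim w 0))
  rw [ofLp_toLp, hmulVec] at hbound
  have hsq : ‖toLp 2 (A *ᵥ w)‖ ^ 2 + ‖toLp 2 (C *ᵥ w)‖ ^ 2 ≤ ‖toLp 2 (A *ᵥ w)‖ ^ 2 :=
    calc ‖toLp 2 (A *ᵥ w)‖ ^ 2 + ‖toLp 2 (C *ᵥ w)‖ ^ 2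
        = ‖toLp 2 (Sum.elim (A *ᵥ w) (C *ᵥ w))‖ ^ 2 := (norm_toLp_sumElim_sq _ _).symm
      _ ≤ (‖fromBlocks A B C D‖ * ‖toLp 2 (Sum.elim w 0)‖) ^ 2 := by gcongr; exact hbound
      _ = ‖fromBlocks A B C D‖ ^ 2 * ‖toLp 2 w‖ ^ 2 := by
        rw [mul_pow, norm_toLp_sumElim_sq]; simp
      _ ≤ (‖A‖ * ‖toLp 2 w‖) ^ 2 := by rw [mul_pow]; gcongr
      _ ≤ ‖toLp 2 (A *ᵥ w)‖ ^ 2 := by gcongr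
  have hC : ‖toLp 2 (C *ᵥ w)‖ = 0 := by nlinarith [norm_nonneg (toLp 2 (C *ᵥ w))]
  simpa using hC

end RCLike

variable {m n m' n' : Type*} [Fintype m] [Fintype n] [Fintype m'] [Fintype n']
  [DecidableEq m] [DecidableEq n] [DecidableEq n']

theorem lowerLeft_eq_zero_of_norm_fromBlocks_le (B : Matrix m n ℂ → Matrix m n' ℂ)
    (C : Matrix m n ℂ →ₗ[ℂ] Matrix m' n ℂ) (D : Matrix m n ℂ → Matrix m' n' ℂ)
    (h : ∀ x, ‖fromBlocks x (B x) (C x) (D x)‖ ≤ ‖x‖) : C = 0 := by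
  have hdiag (u : m → ℂ) (w : n → ℂ) : C (vecMulVec u (star w)) *ᵥ w = 0 :=
    mulVec_eq_zero_of_norm_fromBlocks_le (h _) (norm_vecMulVec_star_mulVec_self u w).ge
  have hrankOne (u : m → ℂ) (v : n → ℂ) : C (vecMulVec u v) = 0 := by
    let S : (n → ℂ) →ₗ⋆[ℂ] (n → ℂ) →ₗ[ℂ] (m' → ℂ) :=
      LinearMap.mk₂'ₛₗ (starRingEnd ℂ) (RingHom.id ℂ) (fun v w => C (vecMulVec u (star v)) *ᵥ w)
        (by intros; simp [star_add, vecMulVec_add, add_mulVec])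
        (by intros; simp [vecMulVec_smul, smul_mulVec])
        (by intros; simp [mulVec_add])
        (by intros; simp [mulVec_smul])
    have hS : S = 0 := LinearMap.eq_zero_of_apply_self_eq_zero (hdiag u)
    apply toLin'.injective
    refine LinearMap.ext fun w => ?_
    simpa [S] using LinearMap.congr_fun₂ hS (star v) w
  apply ext_linearMap
  intro i j
  apply LinearMap.ext_ring
  simpa [single_eq_single_vecMulVec_single] using hrankOne (Pi.single i 1) (Pi.single j 1)

theorem upperRight_eq_zero_of_norm_fromBlocks_le [DecidableEq m']
    (B : Matrix m n ℂ →ₗ[ℂ] Matrix m n' ℂ) (C : Matrix m n ℂ → Matrix m' n ℂ)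
    (D : Matrix m n ℂ → Matrix m' n' ℂ)
    (h : ∀ x, ‖fromBlocks x (B x) (C x) (D x)‖ ≤ ‖x‖) : B = 0 := by
  let B' : Matrix n m ℂ →ₗ[ℂ] Matrix n' m ℂ :=
    (conjTransposeLinearEquiv m n' ℂ ℂ).toLinearMap ∘ₛₗ B ∘ₛₗ
      (conjTransposeLinearEquiv n m ℂ ℂ).toLinearMap
  have hB' : B' = 0 := by
    refine lowerLeft_eq_zero_of_norm_fromBlocks_le (fun y => (C yᴴ)ᴴ) B' (fun y => (D yᴴ)ᴴ)
      fun y => ?_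
    calc ‖fromBlocks y (C yᴴ)ᴴ (B' y) (D yᴴ)ᴴ‖
        = ‖(fromBlocks yᴴ (B yᴴ) (C yᴴ) (D yᴴ))ᴴ‖ := by
          rw [fromBlocks_conjTranspose, conjTranspose_conjTranspose]; rfl
      _ = ‖fromBlocks yᴴ (B yᴴ) (C yᴴ) (D yᴴ)‖ := l2_opNorm_conjTranspose _
      _ ≤ ‖yᴴ‖ := h yᴴ
      _ = ‖y‖ := l2_opNorm_conjTranspose y
  ext1 x
  simpa [B'] using congr(($hB' xᴴ)ᴴ)

end Matrix

theorem ampliation_fin_one {g' g d' d : ℕ}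
    (ψ : Matrix (Fin g') (Fin g) ℂ →ₗ[ℂ] Matrix (Fin d') (Fin d) ℂ)
    (x : Matrix (Fin g') (Fin g) ℂ) :
    ampliation ψ (fun j ℓ => of fun _ _ : Fin 1 => x j ℓ) =
      reindex (Equiv.uniqueProd (Fin d') (Fin 1)).symm
        (Equiv.uniqueProd (Fin d) (Fin 1)).symm (ψ x) := by
  have hψ : ψ x = ∑ j, ∑ ℓ, x j ℓ • ψ (single j ℓ 1) := by
    conv_lhs => rw [matrix_eq_sum_single x]
    simp only [map_sum, ← map_smul, smul_single, smul_eq_mul, mul_one]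
  ext ⟨a, p⟩ ⟨b, q⟩
  simp [hψ, ampliation, Matrix.sum_apply]

theorem CompletelyContractive.norm_apply_le {g' g d' d : ℕ}
    {ψ : Matrix (Fin g') (Fin g) ℂ →ₗ[ℂ] Matrix (Fin d') (Fin d) ℂ}
    (hψ : CompletelyContractive ψ) (x : Matrix (Fin g') (Fin g) ℂ) : ‖ψ x‖ ≤ ‖x‖ := by
  have h := hψ 1 (fun j ℓ => of fun _ _ => x j ℓ)
  rwa [show arrayToMatrix _ = ampliation LinearMap.id _ from rfl, ampliation_fin_one,
    ampliation_fin_one, l2_opNorm_reindex, l2_opNorm_reindex] at h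

/-- If a linear map `Σ : ℂ^{g'×g} → ℂ^{d'×d}` has block form `[[x, σ₁(x)], [σ₂(x), σ₃(x)]]`
and is completely contractive, then `σ₁ = 0` and `σ₂ = 0`. -/
theorem offDiagonal_eq_zero_of_completelyContractive {g' g d' d : ℕ}
    (h1 : g' ≤ d') (h2 : g ≤ d)
    (Sig : Matrix (Fin g') (Fin g) ℂ →ₗ[ℂ] Matrix (Fin d') (Fin d) ℂ)
    (σ₁ : Matrix (Fin g') (Fin g) ℂ →ₗ[ℂ] Matrix (Fin g') (Fin (d - g)) ℂ)
    (σ₂ : Matrix (Fin g') (Fin g) ℂ →ₗ[ℂ] Matrix (Fin (d' - g')) (Fin g) ℂ)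
    (σ₃ : Matrix (Fin g') (Fin g) ℂ →ₗ[ℂ] Matrix (Fin (d' - g')) (Fin (d - g)) ℂ)
    (hblock : ∀ x : Matrix (Fin g') (Fin g) ℂ,
      Sig x = Matrix.reindex (finSumFinEquiv.trans (finCongr (Nat.add_sub_cancel' h1)))
        (finSumFinEquiv.trans (finCongr (Nat.add_sub_cancel' h2)))
        (Matrix.fromBlocks x (σ₁ x) (σ₂ x) (σ₃ x)))
    (hcc : CompletelyContractive Sig) :
    σ₁ = 0 ∧ σ₂ = 0 := by
  have hblock_le (x : Matrix (Fin g') (Fin g) ℂ) : ‖fromBlocks x (σ₁ x) (σ₂ x) (σ₃ x)‖ ≤ ‖x‖ := by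
    rw [← l2_opNorm_reindex (finSumFinEquiv.trans (finCongr (Nat.add_sub_cancel' h1)))
      (finSumFinEquiv.trans (finCongr (Nat.add_sub_cancel' h2))), ← hblock]
    exact hcc.norm_apply_le x
  exact ⟨upperRight_eq_zero_of_norm_fromBlocks_le σ₁ σ₂ σ₃ hblock_le,
    lowerLeft_eq_zero_of_norm_fromBlocks_le σ₁ σ₂ σ₃ hblock_le⟩
end

section
/- Let B_{ij} ∈ ℂ^{d×d} for 1 ≤ i, j ≤ g. Then the matrix Σ_{i,j} B_{ij} ⊗ X_i* X_j ∈ ℂ^{dN×dN} is positive semidefinite for every N ∈ ℕ and every g-tuple X = (X_1, …, X_g) of N×N complex matrices if and only if the gd×gd block matrix G = [B_{ij}]_{i,j=1}^g (with (i,j) block equal to B_{ij}) is positive semidefinite. -/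
open scoped Matrix.Norms.L2Operator ComplexOrder Kronecker
open Matrix

/-! Choosing `X_i = E_{0,i}` (of size `g + 1`, so that `g = 0` needs no separate case) makes
`X_i* X_j = E_{ij}`, so `Σ B_{ij} ⊗ X_i* X_j` is a reindexing of `G`. Conversely, factor
`G = A* A` and let `P_i` be the `i`-th block column of `A`; then `B_{ij} = P_i* P_j`, and
`Σ B_{ij} ⊗ X_i* X_j = (Σ P_i ⊗ X_i)* (Σ P_j ⊗ X_j)`. -/

namespace Matrix

variable {ι κ m m' n p R : Type*}

theorem conjTranspose_single_one_mul_single_one [Fintype κ] [DecidableEq ι] [DecidableEq κ]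
    [Semiring R] [StarRing R] (k : κ) (i j : ι) :
    (single k i (1 : R))ᴴ * single k j (1 : R) = single i j 1 := by
  rw [conjTranspose_single, star_one, single_mul_single_same, one_mul]

theorem comp_of_eq_submatrix_sum_kronecker_single [Fintype ι] [DecidableEq ι] [DecidableEq κ]
    [NonAssocSemiring R] (e : ι ↪ κ) (B : ι → ι → Matrix m m R) :
    comp ι ι m m R (of B) =
      (∑ i, ∑ j, B i j ⊗ₖ single (e i) (e j) (1 : R)).submatrix
        (fun x => (x.2, e x.1)) (fun x => (x.2, e x.1)) := by
  ext ⟨i, a⟩ ⟨j, b⟩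
  simp [sum_apply, kroneckerMap_apply, single_apply, e.injective.eq_iff, ite_and]

theorem sum_kronecker_conjTranspose_mul [Fintype ι] [Fintype m] [Fintype n]
    [CommSemiring R] [StarRing R] (P : ι → Matrix m m' R) (X : ι → Matrix n p R) :
    ∑ i, ∑ j, ((P i)ᴴ * P j) ⊗ₖ ((X i)ᴴ * X j) =
      (∑ i, P i ⊗ₖ X i)ᴴ * ∑ j, P j ⊗ₖ X j := by
  simp only [conjTranspose_sum, Matrix.sum_mul, Matrix.mul_sum, conjTranspose_kronecker,
    mul_kronecker_mul]
  exact Finset.sum_comm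

section RCLike

variable {𝕜 : Type*} [RCLike 𝕜]

theorem PosSemidef.exists_eq_conjTranspose_mul_self [Fintype n] {A : Matrix n n 𝕜}
    (hA : A.PosSemidef) : ∃ C : Matrix n n 𝕜, A = Cᴴ * C := by
  classical
  open scoped MatrixOrder in exact CStarAlgebra.nonneg_iff_eq_star_mul_self.mp hA.nonneg

theorem PosSemidef.sum_kronecker_conjTranspose_mul [Fintype ι] [Fintype m] [Fintype n] [Finite p]
    {B : ι → ι → Matrix m m 𝕜} (hG : (comp ι ι m m 𝕜 (of B)).PosSemidef)
    (X : ι → Matrix n p 𝕜) : (∑ i, ∑ j, B i j ⊗ₖ ((X i)ᴴ * X j)).PosSemidef := by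
  obtain ⟨A, hA⟩ := hG.exists_eq_conjTranspose_mul_self
  have hB : ∀ i j, B i j = (A.submatrix id (Prod.mk i))ᴴ * A.submatrix id (Prod.mk j) := by
    intro i j
    rw [conjTranspose_submatrix, ← submatrix_mul _ _ _ _ _ Function.bijective_id, ← hA]
    rfl
  simp only [hB, Matrix.sum_kronecker_conjTranspose_mul]
  exact posSemidef_conjTranspose_mul_self _

end RCLike

end Matrix

/-- Gram representation criterion: `Σ_{i,j} B_{ij} ⊗ X_i* X_j` is positive semidefinite
for every `N` and every `g`-tuple of `N×N` matrices iff the block matrix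
`G = [B_{ij}]` is positive semidefinite. -/
theorem gram_posSemidef_iff {g d : ℕ} (B : Fin g → Fin g → Matrix (Fin d) (Fin d) ℂ) :
    (∀ (N : ℕ) (X : Fin g → Matrix (Fin N) (Fin N) ℂ),
        (∑ i, ∑ j, B i j ⊗ₖ ((X i)ᴴ * X j)).PosSemidef) ↔
      (Matrix.of fun (p q : Fin g × Fin d) => B p.1 q.1 p.2 q.2).PosSemidef := by
  change _ ↔ (comp (Fin g) (Fin g) (Fin d) (Fin d) ℂ (of B)).PosSemidef
  refine ⟨fun h => ?_, fun hG N X => hG.sum_kronecker_conjTranspose_mul X⟩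
  have hE := h (g + 1) fun i => single 0 i.castSucc 1
  simp only [conjTranspose_single_one_mul_single_one] at hE
  rw [comp_of_eq_submatrix_sum_kronecker_single Fin.castSuccEmb]
  exact hE.submatrix _
end

section
/- Let A = [[1,0,0],[0,√2/2,0],[0,0,0],[0,0,√2/2]] ∈ ℂ^{4×3} and B = [[0,0,0],[√2/2,0,0],[0,1,0],[0,0,√2/2]] ∈ ℂ^{4×3}, and define L(X,Y) := X ⊗ A + Y ⊗ B for pairs of n×n complex matrices. Then L is a distinguished isometry (‖L(X,Y)‖ = 1 whenever X*X + Y*Y = I_n), but L is not completely isometric: for X = [[1,0],[0,0]] and Y = [[0,0],[1,0]], the operator norm of the stacked column matrix [X; Y] equals √2 while ‖L(X,Y)‖ = √(3/2) < √2. -/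
open scoped Matrix.Norms.L2Operator ComplexOrder Kronecker
open Matrix

/-- Evaluation of the truly linear pencil `L(X) = Σ_i X_i ⊗ A_i` at a `g`-tuple of
`n×n` matrices. -/
noncomputable def pencilEval {g d' d n : ℕ} (A : Fin g → Matrix (Fin d') (Fin d) ℂ)
    (X : Fin g → Matrix (Fin n) (Fin n) ℂ) : Matrix (Fin n × Fin d') (Fin n × Fin d) ℂ :=
  ∑ i, X i ⊗ₖ A i

/-- `Δ_L(X) = (Σ_i X_i* X_i) ⊗ I_d − L(X)* L(X)`. -/
noncomputable def pencilDelta {g d' d n : ℕ} (A : Fin g → Matrix (Fin d') (Fin d) ℂ)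
    (X : Fin g → Matrix (Fin n) (Fin n) ℂ) : Matrix (Fin n × Fin d) (Fin n × Fin d) ℂ :=
  (∑ i, (X i)ᴴ * X i) ⊗ₖ (1 : Matrix (Fin d) (Fin d) ℂ) - (pencilEval A X)ᴴ * pencilEval A X

/-- `L` is a distinguished isometry if `‖L(X)‖ = 1` for every tuple `X` of `n×n`
matrices with `Σ_i X_i* X_i = I`. -/
def IsDistinguishedIsometry {g d' d : ℕ} (A : Fin g → Matrix (Fin d') (Fin d) ℂ) : Prop :=
  ∀ (n : ℕ), 0 < n → ∀ X : Fin g → Matrix (Fin n) (Fin n) ℂ,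
    (∑ i, (X i)ᴴ * X i) = 1 → ‖pencilEval A X‖ = 1

/-- The column matrix `[X_1; …; X_g]` obtained by stacking a `g`-tuple of `n×n` matrices. -/
def colStack {g n : ℕ} (X : Fin g → Matrix (Fin n) (Fin n) ℂ) :
    Matrix (Fin g × Fin n) (Fin n) ℂ :=
  Matrix.of fun p c => X p.1 p.2 c

/-!
Put `G_A = [[0,-√2/2,0],[0,0,√2/2]]` and `G_B = [[√2/2,0,0],[0,0,-√2/2]]`. Then
`A^*A + G_A^*G_A = B^*B + G_B^*G_B = I` and `A^*B + G_A^*G_B = 0`, which says exactly that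
`Δ_L(X,Y) = C(X,Y)^* C(X,Y)` for the pencil `C(X,Y) = X ⊗ G_A + Y ⊗ G_B`. So if
`X^*X + Y^*Y = I` then `L^*L + C^*C = I`, whence `‖L‖ ≤ 1`; and `C(X,Y)` has `2n` rows but `3n`
columns, so it kills a nonzero vector, on which `L` is isometric. At the given point
`[X;Y]^*[X;Y] = diag(2,0)` and `L^*L = diag(1,0) ⊗ diag(3/2,3/2,1)`, and the norms are read off
from `‖M‖² = ‖M^*M‖`.
-/

namespace Matrix

variable {m n k : Type*} [Fintype m] [Fintype n] [Fintype k]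

lemma norm_toLp_sq (v : n → ℂ) : ‖WithLp.toLp 2 v‖ ^ 2 = (star v ⬝ᵥ v).re := by
  rw [@norm_sq_eq_re_inner ℂ, EuclideanSpace.inner_eq_star_dotProduct, dotProduct_comm]
  rfl

lemma norm_toLp_mulVec_sq (M : Matrix m n ℂ) (v : n → ℂ) :
    ‖WithLp.toLp 2 (M *ᵥ v)‖ ^ 2 = (star v ⬝ᵥ (Mᴴ * M) *ᵥ v).re := by
  rw [norm_toLp_sq, star_mulVec, ← dotProduct_mulVec, mulVec_mulVec]

lemma norm_toLp_mulVec_sq_add_norm_toLp_mulVec_sq [DecidableEq n] {M : Matrix m n ℂ}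
    {C : Matrix k n ℂ} (h : Mᴴ * M + Cᴴ * C = 1) (v : n → ℂ) :
    ‖WithLp.toLp 2 (M *ᵥ v)‖ ^ 2 + ‖WithLp.toLp 2 (C *ᵥ v)‖ ^ 2 =
      ‖WithLp.toLp 2 v‖ ^ 2 := by
  rw [norm_toLp_mulVec_sq, norm_toLp_mulVec_sq, ← Complex.add_re, ← dotProduct_add,
    ← add_mulVec, h, one_mulVec, norm_toLp_sq]

lemma l2_opNorm_eq_one_of_conjTranspose_mul_self_add_eq_one [DecidableEq n]
    {M : Matrix m n ℂ} {C : Matrix k n ℂ} (h : Mᴴ * M + Cᴴ * C = 1) {w : n → ℂ}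
    (hw : w ≠ 0) (hCw : C *ᵥ w = 0) : ‖M‖ = 1 := by
  refine le_antisymm ?_ ?_
  · refine ContinuousLinearMap.opNorm_le_bound _ zero_le_one fun x => ?_
    rw [one_mul, ← sq_le_sq₀ (norm_nonneg _) (norm_nonneg _)]
    exact (norm_toLp_mulVec_sq_add_norm_toLp_mulVec_sq h x.ofLp).symm ▸
      le_add_of_nonneg_right (sq_nonneg _)
  · have hMw : ‖WithLp.toLp 2 (M *ᵥ w)‖ = ‖WithLp.toLp 2 w‖ := by
      simpa [hCw] using norm_toLp_mulVec_sq_add_norm_toLp_mulVec_sq h w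
    have hw' : 0 < ‖WithLp.toLp 2 w‖ := by simpa using hw
    have hle : ‖WithLp.toLp 2 (M *ᵥ w)‖ ≤ ‖M‖ * ‖WithLp.toLp 2 w‖ :=
      l2_opNorm_mulVec M (WithLp.toLp 2 w)
    exact (le_mul_iff_one_le_left hw').mp (hMw ▸ hle)

lemma l2_opNorm_eq_sqrt_of_conjTranspose_mul_self_eq_diagonal [DecidableEq n]
    {M : Matrix m n ℂ} {v : n → ℂ} (h : Mᴴ * M = diagonal v) : ‖M‖ = Real.sqrt ‖v‖ := by
  rw [← l2_opNorm_diagonal, ← h, l2_opNorm_conjTranspose_mul_self,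
    Real.sqrt_mul_self (norm_nonneg M)]

lemma exists_mulVec_eq_zero_of_card_lt {K : Type*} [Field K] (C : Matrix m n K)
    (h : Fintype.card m < Fintype.card n) : ∃ w ≠ 0, C *ᵥ w = 0 := by
  obtain ⟨w, hw, hw0⟩ := Submodule.exists_mem_ne_zero_of_ne_bot
    (LinearMap.ker_ne_bot_of_finrank_lt (f := C.mulVecLin) (by simpa using h))
  exact ⟨w, hw0, hw⟩

end Matrix

lemma pi_norm_eq_norm_apply_of_forall_le {ι E : Type*} [Fintype ι] [SeminormedAddCommGroup E]
    {v : ι → E} (i₀ : ι) (h : ∀ i, ‖v i‖ ≤ ‖v i₀‖) : ‖v‖ = ‖v i₀‖ :=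
  le_antisymm ((pi_norm_le_iff_of_nonneg (norm_nonneg _)).2 h) (norm_le_pi_norm v i₀)

section Pencil

variable {g d' d'' d n : ℕ}

lemma conjTranspose_colStack_mul_colStack (X : Fin g → Matrix (Fin n) (Fin n) ℂ) :
    (colStack X)ᴴ * colStack X = ∑ i, (X i)ᴴ * X i := by
  ext a b
  simp [colStack, mul_apply, Fintype.sum_prod_type, Matrix.sum_apply]

lemma conjTranspose_pencilEval_mul_pencilEval (A B : Fin g → Matrix (Fin d') (Fin d) ℂ)
    (X : Fin g → Matrix (Fin n) (Fin n) ℂ) :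
    (pencilEval A X)ᴴ * pencilEval B X = ∑ i, ∑ j, ((X i)ᴴ * X j) ⊗ₖ ((A i)ᴴ * B j) := by
  rw [pencilEval, pencilEval, conjTranspose_sum, Matrix.sum_mul]
  simp only [Matrix.mul_sum, conjTranspose_kronecker, mul_kronecker_mul]

lemma pencilDelta_eq_conjTranspose_mul_self (A : Fin g → Matrix (Fin d') (Fin d) ℂ)
    (G : Fin g → Matrix (Fin d'') (Fin d) ℂ)
    (hAG : ∀ i j, (A i)ᴴ * A j + (G i)ᴴ * G j = if i = j then 1 else 0)
    (X : Fin g → Matrix (Fin n) (Fin n) ℂ) :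
    pencilDelta A X = (pencilEval G X)ᴴ * pencilEval G X := by
  refine sub_eq_of_eq_add' ?_
  calc (∑ i, (X i)ᴴ * X i) ⊗ₖ (1 : Matrix (Fin d) (Fin d) ℂ)
      = ∑ i, ((X i)ᴴ * X i) ⊗ₖ (1 : Matrix (Fin d) (Fin d) ℂ) := by
        ext; simp [Matrix.sum_apply, Finset.sum_mul]
    _ = ∑ i, ∑ j, ((X i)ᴴ * X j) ⊗ₖ ((A i)ᴴ * A j + (G i)ᴴ * G j) := by
        simp only [hAG, apply_ite, kronecker_zero, Finset.sum_ite_eq, Finset.mem_univ, if_true]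
    _ = _ := by
        simp only [conjTranspose_pencilEval_mul_pencilEval, kronecker_add,
          Finset.sum_add_distrib]

theorem isDistinguishedIsometry_of_pencilDelta_eq_conjTranspose_mul_self
    {A : Fin g → Matrix (Fin d') (Fin d) ℂ} (G : Fin g → Matrix (Fin d'') (Fin d) ℂ)
    (hd : d'' < d)
    (hΔ : ∀ (n : ℕ) (X : Fin g → Matrix (Fin n) (Fin n) ℂ),
      pencilDelta A X = (pencilEval G X)ᴴ * pencilEval G X) :
    IsDistinguishedIsometry A := by
  intro n hn X hX
  have hgram :
      (pencilEval A X)ᴴ * pencilEval A X + (pencilEval G X)ᴴ * pencilEval G X = 1 := by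
    rw [← hΔ, pencilDelta, hX, one_kronecker_one, add_sub_cancel]
  obtain ⟨w, hw, hGw⟩ := exists_mulVec_eq_zero_of_card_lt (pencilEval G X) (by
    simpa using Nat.mul_lt_mul_of_pos_left hd hn)
  exact l2_opNorm_eq_one_of_conjTranspose_mul_self_add_eq_one hgram hw hGw

end Pencil

noncomputable abbrev pencilA : Matrix (Fin 4) (Fin 3) ℂ :=
  !![(1 : ℂ), 0, 0; 0, (Real.sqrt 2 / 2 : ℂ), 0; 0, 0, 0; 0, 0, (Real.sqrt 2 / 2 : ℂ)]

noncomputable abbrev pencilB : Matrix (Fin 4) (Fin 3) ℂ :=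
  !![(0 : ℂ), 0, 0; (Real.sqrt 2 / 2 : ℂ), 0, 0; 0, 1, 0; 0, 0, (Real.sqrt 2 / 2 : ℂ)]

noncomputable abbrev defectA : Matrix (Fin 2) (Fin 3) ℂ :=
  !![0, -(Real.sqrt 2 / 2 : ℂ), 0; 0, 0, (Real.sqrt 2 / 2 : ℂ)]

noncomputable abbrev defectB : Matrix (Fin 2) (Fin 3) ℂ :=
  !![(Real.sqrt 2 / 2 : ℂ), 0, 0; 0, 0, -(Real.sqrt 2 / 2 : ℂ)]

lemma ofReal_sqrt_two_mul_self : (Real.sqrt 2 : ℂ) * Real.sqrt 2 = 2 := by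
  norm_cast
  exact Real.mul_self_sqrt zero_le_two

lemma conjTranspose_pencil_mul_add_conjTranspose_defect_mul (i j : Fin 2) :
    (![pencilA, pencilB] i)ᴴ * ![pencilA, pencilB] j
      + (![defectA, defectB] i)ᴴ * ![defectA, defectB] j = if i = j then 1 else 0 := by
  fin_cases i <;> fin_cases j <;> ext a b <;> fin_cases a <;> fin_cases b <;>
    simp [Matrix.mul_apply, Fin.sum_univ_four, Fin.sum_univ_two, ← mul_div_mul_comm,
      ofReal_sqrt_two_mul_self, map_ofNat] <;> norm_num

lemma norm_colStack_example :
    ‖colStack ![!![(1 : ℂ), 0; 0, 0], !![(0 : ℂ), 0; 1, 0]]‖ = Real.sqrt 2 := by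
  have h : (colStack ![!![(1 : ℂ), 0; 0, 0], !![(0 : ℂ), 0; 1, 0]])ᴴ *
      colStack ![!![(1 : ℂ), 0; 0, 0], !![(0 : ℂ), 0; 1, 0]] = diagonal (Pi.single 0 2) := by
    rw [conjTranspose_colStack_mul_colStack]
    ext a b
    fin_cases a <;> fin_cases b <;> norm_num [mul_apply, Fin.sum_univ_two]
  rw [l2_opNorm_eq_sqrt_of_conjTranspose_mul_self_eq_diagonal h, Pi.norm_single]
  norm_num

lemma norm_pencilEval_example :
    ‖pencilEval ![pencilA, pencilB] ![!![(1 : ℂ), 0; 0, 0], !![(0 : ℂ), 0; 1, 0]]‖ =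
      Real.sqrt (3 / 2) := by
  have h : (pencilEval ![pencilA, pencilB] ![!![(1 : ℂ), 0; 0, 0], !![(0 : ℂ), 0; 1, 0]])ᴴ *
      pencilEval ![pencilA, pencilB] ![!![(1 : ℂ), 0; 0, 0], !![(0 : ℂ), 0; 1, 0]] =
      diagonal (fun p => ![1, 0] p.1 * ![3 / 2, 3 / 2, 1] p.2) := by
    ext ⟨a, b⟩ ⟨c, e⟩
    fin_cases a <;> fin_cases b <;> fin_cases c <;> fin_cases e <;>
      simp [pencilEval, mul_apply, Fintype.sum_prod_type, Fin.sum_univ_two, Fin.sum_univ_four,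
        ← mul_div_mul_comm, ofReal_sqrt_two_mul_self, map_ofNat] <;> norm_num
  rw [l2_opNorm_eq_sqrt_of_conjTranspose_mul_self_eq_diagonal h,
    pi_norm_eq_norm_apply_of_forall_le (0, 0) (by simp [Fin.forall_fin_succ]; norm_num)]
  norm_num

/-- The explicit pencil `L(X,Y) = X ⊗ A + Y ⊗ B` with
`A = [[1,0,0],[0,√2/2,0],[0,0,0],[0,0,√2/2]]`, `B = [[0,0,0],[√2/2,0,0],[0,1,0],[0,0,√2/2]]`
is a distinguished isometry but not completely isometric: at
`X = [[1,0],[0,0]]`, `Y = [[0,0],[1,0]]` the stacked column has norm `√2` while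
`‖L(X,Y)‖ = √(3/2) < √2`. -/
theorem distinguishedIsometry_not_completelyIsometric_example :
    IsDistinguishedIsometry
        (![!![(1 : ℂ), 0, 0; 0, (Real.sqrt 2 / 2 : ℂ), 0; 0, 0, 0; 0, 0, (Real.sqrt 2 / 2 : ℂ)],
           !![(0 : ℂ), 0, 0; (Real.sqrt 2 / 2 : ℂ), 0, 0; 0, 1, 0; 0, 0, (Real.sqrt 2 / 2 : ℂ)]]) ∧
      ‖colStack ![!![(1 : ℂ), 0; 0, 0], !![(0 : ℂ), 0; 1, 0]]‖ = Real.sqrt 2 ∧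
      ‖pencilEval
          (![!![(1 : ℂ), 0, 0; 0, (Real.sqrt 2 / 2 : ℂ), 0; 0, 0, 0; 0, 0, (Real.sqrt 2 / 2 : ℂ)],
             !![(0 : ℂ), 0, 0; (Real.sqrt 2 / 2 : ℂ), 0, 0; 0, 1, 0; 0, 0, (Real.sqrt 2 / 2 : ℂ)]])
          (![!![(1 : ℂ), 0; 0, 0], !![(0 : ℂ), 0; 1, 0]])‖ = Real.sqrt (3 / 2) ∧
      Real.sqrt (3 / 2) < Real.sqrt 2 :=
  ⟨isDistinguishedIsometry_of_pencilDelta_eq_conjTranspose_mul_self ![defectA, defectB]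
      (by norm_num) fun _ => pencilDelta_eq_conjTranspose_mul_self _ _
        conjTranspose_pencil_mul_add_conjTranspose_defect_mul,
    norm_colStack_example, norm_pencilEval_example,
    Real.sqrt_lt_sqrt (by norm_num) (by norm_num)⟩
end

section
/- (Matrix Linksnullstellensatz) Let F be the free associative ℂ-algebra on g generators x_1, …, x_g. Let P be an m×d matrix and Q an n×d matrix with entries in F. Suppose that for every k ∈ ℕ, every g-tuple X = (X_1, …, X_g) of k×k complex matrices, and every vector v ∈ ℂ^{dk}, P(X)v = 0 implies Q(X)v = 0, where P(X) ∈ ℂ^{mk×dk} denotes the block matrix obtained by applying to each entry of P the unique ℂ-algebra homomorphism F → ℂ^{k×k} sending x_i to X_i. Then there exists an n×m matrix G with entries in F such that Q = G·P (matrix product over F). -/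
open Matrix

/-- Evaluation of a matrix of noncommutative polynomials at a `g`-tuple of `k×k`
complex matrices, as a complex block matrix. -/
noncomputable def ncMatrixEval {g m d k : ℕ}
    (P : Matrix (Fin m) (Fin d) (FreeAlgebra ℂ (Fin g)))
    (X : Fin g → Matrix (Fin k) (Fin k) ℂ) :
    Matrix (Fin m × Fin k) (Fin d × Fin k) ℂ :=
  Matrix.of fun p q => (FreeAlgebra.lift ℂ X (P p.1 q.1)) p.2 q.2

/-!
Let `I` be the left submodule of `F^d` spanned by the rows of `P`, and let `N` bound the degrees of
the entries of `P` and `Q`. The tuples of degree `≤ N + 1` modulo `I` form a finite-dimensional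
space `V`; multiplication by `x_i` is well defined from the classes of degree `≤ N` into `V`, and
extending it arbitrarily gives matrices `X_i` acting on `V`. By induction on the degree, `p(X)`
sends the class of `e_j` to the class of `p e_j` whenever `deg p ≤ N`, so for `v = ([e_j])_j` the
vector `P(X)v` lists the classes of the rows of `P`, which vanish, and `Q(X)v` those of the rows of
`Q`. The hypothesis makes the latter vanish as well, i.e. the rows of `Q` lie in `I`.
-/

namespace FreeAlgebra

variable (K : Type*) {α : Type*} [Field K]

/-- The polynomials of degree at most `t`. -/
def degLE (α : Type*) (t : ℕ) : Submodule K (FreeAlgebra K α) :=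
  Submodule.span K (insert 1 (Set.range (ι K))) ^ t

variable {K}

lemma degLE_mono : Monotone (degLE K α) := fun _ _ hst =>
  pow_le_pow_right' (Submodule.one_le.2 (Submodule.subset_span (Set.mem_insert _ _))) hst

lemma mul_mem_degLE {s t : ℕ} {a b : FreeAlgebra K α} (ha : a ∈ degLE K α s)
    (hb : b ∈ degLE K α t) : a * b ∈ degLE K α (s + t) := by
  rw [degLE, pow_add]
  exact Submodule.mul_mem_mul ha hb

lemma algebraMap_mem_degLE_zero (r : K) : algebraMap K (FreeAlgebra K α) r ∈ degLE K α 0 := by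
  simp [degLE]

lemma ι_mem_degLE_one (i : α) : ι K i ∈ degLE K α 1 := by
  rw [degLE, pow_one]
  exact Submodule.subset_span (Set.mem_insert_of_mem _ ⟨i, rfl⟩)

lemma exists_mem_degLE (a : FreeAlgebra K α) : ∃ t, a ∈ degLE K α t := by
  induction a using FreeAlgebra.induction with
  | grade0 r => exact ⟨0, algebraMap_mem_degLE_zero r⟩
  | grade1 i => exact ⟨1, ι_mem_degLE_one i⟩
  | mul a b ha hb =>
    obtain ⟨s, hs⟩ := ha
    obtain ⟨t, ht⟩ := hb
    exact ⟨s + t, mul_mem_degLE hs ht⟩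
  | add a b ha hb =>
    obtain ⟨s, hs⟩ := ha
    obtain ⟨t, ht⟩ := hb
    exact ⟨max s t,
      add_mem (degLE_mono (le_max_left s t) hs) (degLE_mono (le_max_right s t) ht)⟩

lemma exists_forall_mem_degLE {β : Type*} [Finite β] (f : β → FreeAlgebra K α) :
    ∃ t, ∀ b, f b ∈ degLE K α t := by
  choose t ht using fun b => exists_mem_degLE (f b)
  obtain ⟨T, hT⟩ := (Set.finite_range t).bddAbove
  exact ⟨T, fun b => degLE_mono (hT ⟨b, rfl⟩) (ht b)⟩

instance [Finite α] (t : ℕ) : FiniteDimensional K (degLE K α t) :=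
  Module.Finite.iff_fg.2 <| Submodule.FG.pow
    (Submodule.fg_def.2 ⟨_, (Set.finite_range (ι K)).insert 1, rfl⟩) t

variable (K α) in
def piDegLE (κ : Type*) (t : ℕ) : Submodule K (κ → FreeAlgebra K α) :=
  Submodule.pi Set.univ fun _ => degLE K α t

variable {κ : Type*}

lemma mem_piDegLE {t : ℕ} {u : κ → FreeAlgebra K α} :
    u ∈ piDegLE K α κ t ↔ ∀ j, u j ∈ degLE K α t := by
  simp [piDegLE]

lemma piDegLE_mono : Monotone (piDegLE K α κ) := fun _ _ hst _ hu =>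
  mem_piDegLE.2 fun j => degLE_mono hst (mem_piDegLE.1 hu j)

lemma smul_mem_piDegLE {s t : ℕ} {a : FreeAlgebra K α} {u : κ → FreeAlgebra K α}
    (ha : a ∈ degLE K α s) (hu : u ∈ piDegLE K α κ t) :
    a • u ∈ piDegLE K α κ (s + t) :=
  mem_piDegLE.2 fun j => mul_mem_degLE ha (mem_piDegLE.1 hu j)

lemma single_one_mem_piDegLE_zero [DecidableEq κ] (j : κ) :
    Pi.single j 1 ∈ piDegLE K α κ 0 := by
  refine mem_piDegLE.2 fun j' => ?_
  rcases eq_or_ne j' j with rfl | hne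
  · simpa using algebraMap_mem_degLE_zero (α := α) (1 : K)
  · simp [Pi.single_eq_of_ne hne]

instance [Finite α] [Finite κ] (t : ℕ) : FiniteDimensional K (piDegLE K α κ t) :=
  Submodule.finiteDimensional_of_le
    (S₂ := LinearMap.range (LinearMap.piMap fun _ : κ => (degLE K α t).subtype))
    fun u hu => ⟨fun j => ⟨u j, mem_piDegLE.1 hu j⟩, rfl⟩

end FreeAlgebra

lemma Submodule.exists_matrix_compression {K E ι : Type*} [Field K] [AddCommGroup E]
    [Module K E] {W W' : Submodule K E} [FiniteDimensional K W] (hW' : W' ≤ W)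
    (f : ι → E →ₗ[K] E) (hf : ∀ i, ∀ u ∈ W', f i u ∈ W) :
    ∃ (k : ℕ) (X : ι → Matrix (Fin k) (Fin k) K) (e : E →ₗ[K] Fin k → K),
      (∀ u ∈ W, e u = 0 → u = 0) ∧ ∀ i, ∀ u ∈ W', X i *ᵥ e u = e (f i u) := by
  classical
  let b := Module.finBasis K W
  obtain ⟨e, he⟩ := LinearMap.exists_extend (p := W) b.equivFun.toLinearMap
  have he' (u : E) (hu : u ∈ W) : e u = b.repr ⟨u, hu⟩ := LinearMap.congr_fun he ⟨u, hu⟩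
  have hσ (i : ι) :
      ∃ σ : E →ₗ[K] W, ∀ u (hu : u ∈ W'), σ u = ⟨f i u, hf i u hu⟩ := by
    obtain ⟨σ, hσ⟩ := LinearMap.exists_extend (p := W')
      ((f i ∘ₗ W'.subtype).codRestrict W fun u => hf i u u.2)
    exact ⟨σ, fun u hu => LinearMap.congr_fun hσ ⟨u, hu⟩⟩
  choose σ hσ using hσ
  refine ⟨_, fun i => LinearMap.toMatrix b b (σ i ∘ₗ W.subtype), e, fun u hu h0 => ?_,
    fun i u hu => ?_⟩
  · rw [he' u hu] at h0
    simpa using h0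
  · rw [he' u (hW' hu), LinearMap.toMatrix_mulVec_repr, he' _ (hf i u hu)]
    simp [hσ i u hu]

namespace FreeAlgebra

variable {K α κ : Type*} [Field K] {k N : ℕ} {X : α → Matrix (Fin k) (Fin k) K}
  {ℓ : (κ → FreeAlgebra K α) →ₗ[K] Fin k → K}

lemma lift_mulVec_of_mem_degLE_one
    (hX : ∀ i, ∀ u ∈ piDegLE K α κ N, X i *ᵥ ℓ u = ℓ (ι K i • u))
    {a : FreeAlgebra K α} (ha : a ∈ degLE K α 1) {u : κ → FreeAlgebra K α}
    (hu : u ∈ piDegLE K α κ N) : lift K X a *ᵥ ℓ u = ℓ (a • u) := by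
  rw [degLE, pow_one] at ha
  induction ha using Submodule.span_induction with
  | mem a ha =>
    rcases ha with rfl | ⟨i, rfl⟩
    · simp
    · simpa using hX i u hu
  | zero => simp
  | add a b _ _ iha ihb => simp [add_mulVec, iha, ihb, add_smul]
  | smul c a _ ih => simp [Matrix.smul_mulVec, ih, smul_assoc]

lemma lift_mulVec_of_mem_degLE
    (hX : ∀ i, ∀ u ∈ piDegLE K α κ N, X i *ᵥ ℓ u = ℓ (ι K i • u)) {t s : ℕ}
    (hts : t + s ≤ N + 1) {p : FreeAlgebra K α} (hp : p ∈ degLE K α t)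
    {u : κ → FreeAlgebra K α} (hu : u ∈ piDegLE K α κ s) :
    lift K X p *ᵥ ℓ u = ℓ (p • u) := by
  induction t generalizing p with
  | zero =>
    obtain ⟨r, rfl⟩ := Submodule.mem_one.1 (by simpa [degLE] using hp)
    simp [Algebra.algebraMap_eq_smul_one, Matrix.smul_mulVec]
  | succ t ih =>
    rw [degLE, pow_succ'] at hp
    refine Submodule.mul_induction_on hp (fun a ha b hb => ?_) fun a b iha ihb => ?_
    · have hbu : b • u ∈ piDegLE K α κ N := piDegLE_mono (by omega) (smul_mem_piDegLE hb hu)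
      rw [map_mul, ← mulVec_mulVec, ih (by omega) hb, mul_smul,
        lift_mulVec_of_mem_degLE_one hX (by rwa [degLE, pow_one]) hbu]
    · simp [add_mulVec, iha, ihb, add_smul]

end FreeAlgebra

theorem FreeAlgebra.exists_truncated_matrix_rep {K α κ : Type*} [Field K] [Finite α] [Finite κ]
    (I : Submodule (FreeAlgebra K α) (κ → FreeAlgebra K α)) (N : ℕ) :
    ∃ (k : ℕ) (X : α → Matrix (Fin k) (Fin k) K)
      (ℓ : (κ → FreeAlgebra K α) →ₗ[K] Fin k → K),
      (∀ u ∈ piDegLE K α κ (N + 1), ℓ u = 0 ↔ u ∈ I) ∧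
      ∀ {t s : ℕ}, t + s ≤ N + 1 → ∀ {p : FreeAlgebra K α}, p ∈ degLE K α t →
        ∀ {u : κ → FreeAlgebra K α}, u ∈ piDegLE K α κ s →
          lift K X p *ᵥ ℓ u = ℓ (p • u) := by
  -- Since `I` is a left submodule, each generator acts on the quotient by `I`; `X` compresses
  -- these actions to the image of the tuples of degree `≤ N + 1`.
  let π := I.mkQ.restrictScalars K
  obtain ⟨k, X, e, he, hX⟩ := Submodule.exists_matrix_compression
    (W := (piDegLE K α κ (N + 1)).map π) (Submodule.map_mono (piDegLE_mono N.le_succ))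
    (fun i => DistribSMul.toLinearMap K _ (ι K i)) (by
      rintro i _ ⟨u, hu, rfl⟩
      exact ⟨ι K i • u,
        by simpa [add_comm] using smul_mem_piDegLE (ι_mem_degLE_one i) hu, rfl⟩)
  refine ⟨k, X, e ∘ₗ π, fun u hu => ⟨fun h => ?_, fun h => ?_⟩,
    lift_mulVec_of_mem_degLE fun i u hu => hX i (π u) ⟨u, hu, rfl⟩⟩
  · exact (Submodule.Quotient.mk_eq_zero I).1 (he _ ⟨u, hu, rfl⟩ h)
  · simp [π, (Submodule.Quotient.mk_eq_zero I).2 h]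

lemma Matrix.exists_eq_mul_of_forall_mem_span_rows {R m n d : Type*} [Semiring R] [Fintype m]
    {P : Matrix m d R} {Q : Matrix n d R} (h : ∀ r, Q r ∈ Submodule.span R (Set.range P)) :
    ∃ G : Matrix n m R, Q = G * P := by
  choose G hG using fun r => (Submodule.mem_span_range_iff_exists_fun R).1 (h r)
  refine ⟨Matrix.of G, Matrix.ext fun r j => ?_⟩
  simp [Matrix.mul_apply, ← hG r, Finset.sum_apply]

lemma ncMatrixEval_mulVec {g a d k : ℕ} (R : Matrix (Fin a) (Fin d) (FreeAlgebra ℂ (Fin g)))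
    (X : Fin g → Matrix (Fin k) (Fin k) ℂ)
    (ℓ : (Fin d → FreeAlgebra ℂ (Fin g)) →ₗ[ℂ] Fin k → ℂ)
    (hR : ∀ i j,
      FreeAlgebra.lift ℂ X (R i j) *ᵥ ℓ (Pi.single j 1) = ℓ (R i j • Pi.single j 1)) :
    ncMatrixEval R X *ᵥ (fun z => ℓ (Pi.single z.1 1) z.2) = fun z => ℓ (R z.1) z.2 := by
  ext ⟨i, l⟩
  have hrow : ∑ j, R i j • Pi.single j 1 = R i := by
    simp [← Pi.single_smul', Finset.univ_sum_single]
  calc _ = ∑ j, (FreeAlgebra.lift ℂ X (R i j) *ᵥ ℓ (Pi.single j 1)) l := by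
        simp [mulVec, dotProduct, ncMatrixEval, Fintype.sum_prod_type]
    _ = ℓ (R i) l := by simp_rw [hR, ← Finset.sum_apply, ← map_sum, hrow]

open FreeAlgebra in
/-- Matrix Linksnullstellensatz: if `P(X)v = 0` implies `Q(X)v = 0` for all matrix
tuples `X` and vectors `v`, then `Q = G·P` for some matrix `G` of noncommutative
polynomials. -/
theorem matrix_linksnullstellensatz {g m n d : ℕ}
    (P : Matrix (Fin m) (Fin d) (FreeAlgebra ℂ (Fin g)))
    (Q : Matrix (Fin n) (Fin d) (FreeAlgebra ℂ (Fin g)))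
    (h : ∀ (k : ℕ) (X : Fin g → Matrix (Fin k) (Fin k) ℂ) (v : Fin d × Fin k → ℂ),
      ncMatrixEval P X *ᵥ v = 0 → ncMatrixEval Q X *ᵥ v = 0) :
    ∃ G : Matrix (Fin n) (Fin m) (FreeAlgebra ℂ (Fin g)), Q = G * P := by
  classical
  obtain ⟨N, hN⟩ := exists_forall_mem_degLE (Sum.elim (fun z : Fin m × Fin d => P z.1 z.2)
    fun z : Fin n × Fin d => Q z.1 z.2)
  obtain ⟨k, X, ℓ, hker, hX⟩ :=
    exists_truncated_matrix_rep (Submodule.span (FreeAlgebra ℂ (Fin g)) (Set.range P)) N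
  let v : Fin d × Fin k → ℂ := fun z => ℓ (Pi.single z.1 1) z.2
  have heval {a : ℕ} (R : Matrix (Fin a) (Fin d) (FreeAlgebra ℂ (Fin g)))
      (hR : ∀ i j, R i j ∈ degLE ℂ (Fin g) N) :
      ncMatrixEval R X *ᵥ v = fun z => ℓ (R z.1) z.2 :=
    ncMatrixEval_mulVec R X ℓ fun i j => hX (by omega) (hR i j) (single_one_mem_piDegLE_zero j)
  have hrow {a : ℕ} (R : Matrix (Fin a) (Fin d) (FreeAlgebra ℂ (Fin g)))
      (hR : ∀ i j, R i j ∈ degLE ℂ (Fin g) N) (i : Fin a) :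
      R i ∈ piDegLE ℂ (Fin g) (Fin d) (N + 1) :=
    piDegLE_mono N.le_succ (mem_piDegLE.2 (hR i))
  have hP : ∀ i j, P i j ∈ degLE ℂ (Fin g) N := fun i j => hN (.inl (i, j))
  have hQ : ∀ r j, Q r j ∈ degLE ℂ (Fin g) N := fun r j => hN (.inr (r, j))
  have hPv : ncMatrixEval P X *ᵥ v = 0 := by
    rw [heval P hP]
    ext ⟨i, l⟩
    exact congr_fun ((hker _ (hrow P hP i)).2 (Submodule.subset_span ⟨i, rfl⟩)) l
  have hQv := h k X v hPv
  rw [heval Q hQ] at hQv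
  exact exists_eq_mul_of_forall_mem_span_rows fun r =>
    (hker _ (hrow Q hQ r)).1 (funext fun l => congr_fun hQv (r, l))
end

section
/- Let A_1, A_2 ∈ ℂ^{d'×d}, and for pairs of n×n complex matrices define L(X_1, X_2) := X_1 ⊗ A_1 + X_2 ⊗ A_2 and Δ_L(X_1, X_2) := (X_1*X_1 + X_2*X_2) ⊗ I_d − L(X_1,X_2)* L(X_1,X_2). Suppose: (i) L is orthotropic; (ii) Δ_L(X_1, X_2) is positive semidefinite for every n and all n×n matrices X_1, X_2; and (iii) for all scalars x_1, x_2 ∈ ℂ, the d×d matrix Δ_L(x_1, x_2) = (|x_1|² + |x_2|²)I_d − L(x_1,x_2)*L(x_1,x_2) is singular (has a nonzero kernel vector). Then for every n and all n×n matrices X_1, X_2, the matrix Δ_L(X_1, X_2) has a nonzero kernel vector (Δ_L clings for all matrix pairs). -/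
open scoped Matrix.Norms.L2Operator ComplexOrder Kronecker
open Matrix

/-- Evaluation of the two-variable pencil `L(X₁,X₂) = X₁ ⊗ A₁ + X₂ ⊗ A₂`. -/
noncomputable def pencil2Eval {d' d n : ℕ} (A₁ A₂ : Matrix (Fin d') (Fin d) ℂ)
    (X₁ X₂ : Matrix (Fin n) (Fin n) ℂ) : Matrix (Fin n × Fin d') (Fin n × Fin d) ℂ :=
  X₁ ⊗ₖ A₁ + X₂ ⊗ₖ A₂

/-- `Δ_L(X₁,X₂) = (X₁*X₁ + X₂*X₂) ⊗ I_d − L(X₁,X₂)* L(X₁,X₂)`. -/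
noncomputable def pencil2Delta {d' d n : ℕ} (A₁ A₂ : Matrix (Fin d') (Fin d) ℂ)
    (X₁ X₂ : Matrix (Fin n) (Fin n) ℂ) : Matrix (Fin n × Fin d) (Fin n × Fin d) ℂ :=
  (X₁ᴴ * X₁ + X₂ᴴ * X₂) ⊗ₖ (1 : Matrix (Fin d) (Fin d) ℂ) -
    (pencil2Eval A₁ A₂ X₁ X₂)ᴴ * pencil2Eval A₁ A₂ X₁ X₂

/-- Scalar evaluation `L(x₁,x₂) = x₁ A₁ + x₂ A₂`. -/
noncomputable def pencil2Scalar {d' d : ℕ} (A₁ A₂ : Matrix (Fin d') (Fin d) ℂ)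
    (x₁ x₂ : ℂ) : Matrix (Fin d') (Fin d) ℂ :=
  x₁ • A₁ + x₂ • A₂

/-- Scalar `Δ_L(x₁,x₂) = (|x₁|² + |x₂|²) I_d − L(x₁,x₂)* L(x₁,x₂)`. -/
noncomputable def pencil2ScalarDelta {d' d : ℕ} (A₁ A₂ : Matrix (Fin d') (Fin d) ℂ)
    (x₁ x₂ : ℂ) : Matrix (Fin d) (Fin d) ℂ :=
  (star x₁ * x₁ + star x₂ * x₂) • (1 : Matrix (Fin d) (Fin d) ℂ) -
    (pencil2Scalar A₁ A₂ x₁ x₂)ᴴ * pencil2Scalar A₁ A₂ x₁ x₂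

/-!
Since ℂ is algebraically closed there is `ξ ≠ 0` with `X₁ ξ = x₁ η` and `X₂ ξ = x₂ η` for some
scalars `x₁, x₂` and a vector `η`. Then `L(X₁,X₂)(ξ ⊗ w) = η ⊗ L(x₁,x₂) w`, so the quadratic form of
`Δ_L(X₁,X₂)` at `ξ ⊗ w` is `‖η‖² ⟨w, Δ_L(x₁,x₂) w⟩`. Choosing `w` in the kernel of the scalar
`Δ_L(x₁,x₂)` makes it vanish, and positivity of `Δ_L(X₁,X₂)` puts `ξ ⊗ w` in its kernel.
-/

namespace Matrix

variable {l m n p R : Type*}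

def kroneckerVec [Mul R] (a : m → R) (b : n → R) : m × n → R := fun r => a r.1 * b r.2

theorem kroneckerVec_ne_zero [MulZeroClass R] [NoZeroDivisors R] {a : m → R} {b : n → R}
    (ha : a ≠ 0) (hb : b ≠ 0) : kroneckerVec a b ≠ 0 := by
  obtain ⟨i, hi⟩ := Function.ne_iff.mp ha
  obtain ⟨j, hj⟩ := Function.ne_iff.mp hb
  exact Function.ne_iff.mpr ⟨(i, j), mul_ne_zero hi hj⟩

variable [Fintype m] [Fintype n]

theorem kronecker_mulVec_kroneckerVec [CommSemiring R] (A : Matrix l m R) (B : Matrix p n R)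
    (a : m → R) (b : n → R) :
    (A ⊗ₖ B) *ᵥ kroneckerVec a b = kroneckerVec (A *ᵥ a) (B *ᵥ b) := by
  funext r
  simp only [kroneckerVec, mulVec, dotProduct, kroneckerMap_apply, Fintype.sum_prod_type,
    Finset.sum_mul, Finset.mul_sum]
  rw [Finset.sum_comm]
  exact Finset.sum_congr rfl fun i _ => Finset.sum_congr rfl fun j _ => by ring

theorem star_kroneckerVec_dotProduct_kroneckerVec [CommSemiring R] [StarRing R]
    (a c : m → R) (b e : n → R) :
    star (kroneckerVec a b) ⬝ᵥ kroneckerVec c e = (star a ⬝ᵥ c) * (star b ⬝ᵥ e) := by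
  simp only [kroneckerVec, dotProduct, Pi.star_apply, star_mul', Fintype.sum_prod_type,
    Finset.sum_mul, Finset.mul_sum]
  rw [Finset.sum_comm]
  exact Finset.sum_congr rfl fun i _ => Finset.sum_congr rfl fun j _ => by ring

theorem star_dotProduct_conjTranspose_mul_self_mulVec [CommSemiring R] [StarRing R]
    (M : Matrix m n R) (a : n → R) :
    star a ⬝ᵥ (Mᴴ * M) *ᵥ a = star (M *ᵥ a) ⬝ᵥ (M *ᵥ a) := by
  rw [← mulVec_mulVec, dotProduct_mulVec, ← star_mulVec]

theorem exists_ne_zero_mulVec_collinear {K : Type*} [Field K] [IsAlgClosed K]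
    [DecidableEq n] [Nonempty n] (X₁ X₂ : Matrix n n K) :
    ∃ ξ : n → K, ξ ≠ 0 ∧ ∃ (x₁ x₂ : K) (η : n → K), X₁ *ᵥ ξ = x₁ • η ∧ X₂ *ᵥ ξ = x₂ • η := by
  by_cases hX₁ : IsUnit X₁.det
  · obtain ⟨μ, hμ⟩ := Module.End.exists_eigenvalue (toLin' (X₁⁻¹ * X₂))
    obtain ⟨ξ, hξ⟩ := hμ.exists_hasEigenvector
    refine ⟨ξ, hξ.2, 1, μ, X₁ *ᵥ ξ, (one_smul _ _).symm, ?_⟩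
    have hMξ : (X₁⁻¹ * X₂) *ᵥ ξ = μ • ξ := by simpa using hξ.apply_eq_smul
    calc X₂ *ᵥ ξ = X₁ *ᵥ (X₁⁻¹ * X₂) *ᵥ ξ := by
          rw [mulVec_mulVec, mul_nonsing_inv_cancel_left _ _ hX₁]
      _ = μ • X₁ *ᵥ ξ := by rw [hMξ, mulVec_smul]
  · obtain ⟨ξ, hξ, hker⟩ := exists_mulVec_eq_zero_iff.mpr (by simpa using hX₁)
    exact ⟨ξ, hξ, 0, 1, X₂ *ᵥ ξ, by rw [hker, zero_smul], (one_smul _ _).symm⟩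

end Matrix

open Matrix

section Pencil

variable {d' d n : ℕ} (A₁ A₂ : Matrix (Fin d') (Fin d) ℂ) {X₁ X₂ : Matrix (Fin n) (Fin n) ℂ}
  {ξ η : Fin n → ℂ} {x₁ x₂ : ℂ}

theorem pencil2Eval_mulVec_kroneckerVec (h₁ : X₁ *ᵥ ξ = x₁ • η) (h₂ : X₂ *ᵥ ξ = x₂ • η)
    (w : Fin d → ℂ) :
    pencil2Eval A₁ A₂ X₁ X₂ *ᵥ kroneckerVec ξ w =
      kroneckerVec η (pencil2Scalar A₁ A₂ x₁ x₂ *ᵥ w) := by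
  funext r
  simp only [pencil2Eval, pencil2Scalar, add_mulVec, kronecker_mulVec_kroneckerVec, h₁, h₂,
    smul_mulVec, kroneckerVec, Pi.add_apply, Pi.smul_apply, smul_eq_mul]
  ring

theorem star_kroneckerVec_dotProduct_pencil2Delta_mulVec (h₁ : X₁ *ᵥ ξ = x₁ • η)
    (h₂ : X₂ *ᵥ ξ = x₂ • η) (w : Fin d → ℂ) :
    star (kroneckerVec ξ w) ⬝ᵥ pencil2Delta A₁ A₂ X₁ X₂ *ᵥ kroneckerVec ξ w =
      (star η ⬝ᵥ η) * (star w ⬝ᵥ pencil2ScalarDelta A₁ A₂ x₁ x₂ *ᵥ w) := by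
  have hgram : star ξ ⬝ᵥ (X₁ᴴ * X₁ + X₂ᴴ * X₂) *ᵥ ξ =
      (star x₁ * x₁ + star x₂ * x₂) * (star η ⬝ᵥ η) := by
    rw [add_mulVec, dotProduct_add, star_dotProduct_conjTranspose_mul_self_mulVec,
      star_dotProduct_conjTranspose_mul_self_mulVec, h₁, h₂]
    simp only [star_smul, smul_dotProduct, dotProduct_smul, smul_eq_mul]
    ring
  rw [pencil2Delta, pencil2ScalarDelta, sub_mulVec, sub_mulVec, dotProduct_sub, dotProduct_sub,
    kronecker_mulVec_kroneckerVec, one_mulVec, star_kroneckerVec_dotProduct_kroneckerVec, hgram,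
    star_dotProduct_conjTranspose_mul_self_mulVec, pencil2Eval_mulVec_kroneckerVec A₁ A₂ h₁ h₂,
    star_kroneckerVec_dotProduct_kroneckerVec, star_dotProduct_conjTranspose_mul_self_mulVec,
    smul_mulVec, one_mulVec, dotProduct_smul, smul_eq_mul]
  ring

end Pencil

theorem two_variable_clinging_general {d' d : ℕ} (A₁ A₂ : Matrix (Fin d') (Fin d) ℂ)
    (hpsd : ∀ (n : ℕ) (X₁ X₂ : Matrix (Fin n) (Fin n) ℂ),
      (pencil2Delta A₁ A₂ X₁ X₂).PosSemidef)
    (hscalar : ∀ x₁ x₂ : ℂ,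
      ∃ v : Fin d → ℂ, v ≠ 0 ∧ pencil2ScalarDelta A₁ A₂ x₁ x₂ *ᵥ v = 0) :
    ∀ (n : ℕ), 0 < n → ∀ X₁ X₂ : Matrix (Fin n) (Fin n) ℂ,
      ∃ v : Fin n × Fin d → ℂ, v ≠ 0 ∧ pencil2Delta A₁ A₂ X₁ X₂ *ᵥ v = 0 := by
  intro n hn X₁ X₂
  have : Nonempty (Fin n) := ⟨⟨0, hn⟩⟩
  obtain ⟨ξ, hξ, x₁, x₂, η, h₁, h₂⟩ := exists_ne_zero_mulVec_collinear X₁ X₂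
  obtain ⟨w, hw, hΔw⟩ := hscalar x₁ x₂
  refine ⟨kroneckerVec ξ w, kroneckerVec_ne_zero hξ hw, ?_⟩
  rw [← (hpsd n X₁ X₂).dotProduct_mulVec_zero_iff,
    star_kroneckerVec_dotProduct_pencil2Delta_mulVec A₁ A₂ h₁ h₂, hΔw, dotProduct_zero, mul_zero]

/-- In two variables: if `L` is orthotropic, `Δ_L` is matrix positive semidefinite, and
`Δ_L` clings at all scalar points, then `Δ_L` clings at all matrix pairs. -/
theorem two_variable_clinging {d' d : ℕ} (A₁ A₂ : Matrix (Fin d') (Fin d) ℂ)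
    (horthotropic : ∀ (x₁ x₂ : ℂ) (w : Fin d → ℂ),
      star (pencil2Scalar A₁ A₂ x₁ x₂ *ᵥ w) ⬝ᵥ (pencil2Scalar A₁ A₂ x₁ x₂ *ᵥ w) =
          star w ⬝ᵥ w →
      ∀ y₁ y₂ : ℂ, star x₁ * y₁ + star x₂ * y₂ = 0 →
      ∀ u : Fin d → ℂ,
        star (pencil2Scalar A₁ A₂ x₁ x₂ *ᵥ w) ⬝ᵥ (pencil2Scalar A₁ A₂ y₁ y₂ *ᵥ u) = 0)
    (hpsd : ∀ (n : ℕ) (X₁ X₂ : Matrix (Fin n) (Fin n) ℂ),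
      (pencil2Delta A₁ A₂ X₁ X₂).PosSemidef)
    (hscalar : ∀ x₁ x₂ : ℂ,
      ∃ v : Fin d → ℂ, v ≠ 0 ∧ pencil2ScalarDelta A₁ A₂ x₁ x₂ *ᵥ v = 0) :
    ∀ (n : ℕ), 0 < n → ∀ X₁ X₂ : Matrix (Fin n) (Fin n) ℂ,
      ∃ v : Fin n × Fin d → ℂ, v ≠ 0 ∧ pencil2Delta A₁ A₂ X₁ X₂ *ᵥ v = 0 :=
  two_variable_clinging_general A₁ A₂ hpsd hscalar
end

section
/- Fix N, g', g, d', d ∈ ℕ and let B denote the closed unit ball {X ∈ ℂ^{Ng'×Ng} : ‖X‖ ≤ 1} in the operator norm. Let f: B → ℂ^{d'×d} be continuous on B and holomorphic (complex differentiable) on the open ball {‖X‖ < 1}. Then for every k with 0 < k ≤ min(g', g) and every X ∈ B, ‖f(X)‖ ≤ sup{‖f(U)‖ : U ∈ B and U is isometric on a subspace of ℂ^{Ng} of dimension at least Nk}. -/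
/-!
For `‖X‖ < 1` write `X = W A` with `A = W†X` self-adjoint, `‖A u‖ = ‖X u‖`, and `W` a contraction
isometric on a subspace `S` of dimension `min (dim E) (dim F)` (a polar decomposition). Put
`φ z = (X + z W)(1 + z A)⁻¹`. With `y = (1 + z A) u`,
`‖φ z y‖² + (1 - |z|²)(‖u‖² - ‖X u‖²) + |z|²(‖u‖² - ‖W u‖²) = ‖y‖²`,
so `φ` maps the closed (open) unit disc holomorphically into the closed (open) unit ball,
`φ 0 = X`, and for `|z| = 1` the contraction `φ z` is isometric on `(1 + z A) S`. The maximum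
modulus principle for `f ∘ φ` on the disc bounds `‖f X‖`; the case `‖X‖ = 1` follows by continuity.
-/

open scoped Matrix.Norms.L2Operator
open Matrix

/-- `U` is isometric on a subspace of `ℂ^{Ng}` of dimension at least `m`. -/
def IsometricOnDimGE {p q : ℕ} (U : Matrix (Fin p) (Fin q) ℂ) (m : ℕ) : Prop :=
  ∃ S : Submodule ℂ (Fin q → ℂ), m ≤ Module.finrank ℂ S ∧
    ∀ y ∈ S, star (U *ᵥ y) ⬝ᵥ (U *ᵥ y) = star y ⬝ᵥ y

open Module Metric
open scoped InnerProductSpace InnerProduct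

section LinearIsometry

variable {𝕜 V V' : Type*} [RCLike 𝕜] [NormedAddCommGroup V] [InnerProductSpace 𝕜 V]
  [NormedAddCommGroup V'] [InnerProductSpace 𝕜 V']

theorem LinearIsometry.nonempty_of_finrank_le [FiniteDimensional 𝕜 V] [FiniteDimensional 𝕜 V']
    (h : finrank 𝕜 V ≤ finrank 𝕜 V') : Nonempty (V →ₗᵢ[𝕜] V') := by
  let bV := stdOrthonormalBasis 𝕜 V
  let bV' := stdOrthonormalBasis 𝕜 V'
  refine ⟨(bV.toBasis.constr 𝕜 (bV' ∘ Fin.castLE h)).isometryOfOrthonormal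
    (v := bV.toBasis) (by simp) ?_⟩
  have : (bV.toBasis.constr 𝕜 (bV' ∘ Fin.castLE h)) ∘ bV.toBasis = bV' ∘ Fin.castLE h :=
    funext fun i => bV.toBasis.constr_basis 𝕜 _ i
  rw [this]
  exact bV'.orthonormal.comp _ (Fin.castLE_injective h)

theorem LinearIsometry.exists_comp_eq_of_norm_eq [FiniteDimensional 𝕜 V] {B Y : V' →ₗ[𝕜] V}
    (h : ∀ x, ‖B x‖ = ‖Y x‖) : ∃ U : V →ₗᵢ[𝕜] V, ∀ x, U (B x) = Y x := by
  have hker : LinearMap.ker B ≤ LinearMap.ker Y := fun x hx => by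
    simpa [← norm_eq_zero, ← h x] using hx
  let V₀ : LinearMap.range B →ₗ[𝕜] V := (LinearMap.ker B).liftQ Y hker ∘ₗ B.quotKerEquivRange.symm
  have hV₀ : ∀ x, V₀ ⟨B x, LinearMap.mem_range_self B x⟩ = Y x := fun x => by
    simp [V₀, LinearMap.quotKerEquivRange_symm_apply_image]
  let L : LinearMap.range B →ₗᵢ[𝕜] V :=
    { V₀ with
      norm_map' := by
        rintro ⟨_, x, rfl⟩
        simpa [← h x] using congrArg norm (hV₀ x) }
  exact ⟨L.extend, fun x => (L.extend_apply ⟨B x, _⟩).trans (hV₀ x)⟩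

end LinearIsometry

theorem ContinuousLinearMap.opNorm_le_sqrt {𝕜 V V' : Type*} [NontriviallyNormedField 𝕜]
    [SeminormedAddCommGroup V] [NormedSpace 𝕜 V] [SeminormedAddCommGroup V'] [NormedSpace 𝕜 V']
    {T : V →L[𝕜] V'} {c : ℝ} (h : ∀ y, ‖T y‖ ^ 2 ≤ c * ‖y‖ ^ 2) : ‖T‖ ≤ √c :=
  T.opNorm_le_bound (Real.sqrt_nonneg c) fun y => by
    rw [← Real.sqrt_sq (norm_nonneg (T y)), ← Real.sqrt_sq (norm_nonneg y),
      ← Real.sqrt_mul' _ (sq_nonneg _)]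
    exact Real.sqrt_le_sqrt (h y)

variable {E F : Type*} [NormedAddCommGroup E] [InnerProductSpace ℂ E]
  [NormedAddCommGroup F] [InnerProductSpace ℂ F]

def ContinuousLinearMap.IsometricOnDimGE (U : E →L[ℂ] F) (q : ℕ) : Prop :=
  ∃ S : Submodule ℂ E, q ≤ finrank ℂ S ∧ ∀ y ∈ S, ‖U y‖ = ‖y‖

section PolarPartner

variable [CompleteSpace E] [CompleteSpace F]

open ContinuousLinearMap

/-- The model is the partial isometry `W` of a polar decomposition `X = W |X|`, for which
`W†X = |X|`. -/
structure IsPolarPartner (X W : E →L[ℂ] F) : Prop where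
  norm_le_one : ‖W‖ ≤ 1
  isSelfAdjoint : IsSelfAdjoint (W† ∘L X)
  norm_adjoint_comp_apply (u : E) : ‖(W† ∘L X) u‖ = ‖X u‖

/-- For `X = W A` with `A = W†X` this is `W (A + z)(1 + z A)⁻¹`: every singular value `s` of `X`
moves along the disc automorphism `z ↦ (s + z) / (1 + s z)`. -/
noncomputable def mobiusPath (X W : E →L[ℂ] F) (z : ℂ) : E →L[ℂ] F :=
  (X + z • W) ∘L Ring.inverse (1 + z • (W† ∘L X))

theorem mobiusPath_zero (X W : E →L[ℂ] F) : mobiusPath X W 0 = X := by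
  simp only [mobiusPath, zero_smul, add_zero, Ring.inverse_one]
  rfl

theorem mobiusPath_apply_one_add_smul {X W : E →L[ℂ] F} {z : ℂ}
    (hz : IsUnit (1 + z • (W† ∘L X))) (u : E) :
    mobiusPath X W z ((1 + z • (W† ∘L X)) u) = (X + z • W) u := by
  rw [mobiusPath, ContinuousLinearMap.comp_apply, ← mul_apply_eq_comp, Ring.inverse_mul_cancel _ hz,
    one_apply_eq_self]

theorem differentiableAt_mobiusPath {X W : E →L[ℂ] F} {z : ℂ}
    (hz : IsUnit (1 + z • (W† ∘L X))) : DifferentiableAt ℂ (mobiusPath X W) z :=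
  ((differentiableAt_const X).add (differentiableAt_id.smul_const W)).clm_comp
    (((differentiableAt_const 1).add (differentiableAt_id.smul_const _)).inverse hz)

namespace IsPolarPartner

variable {X W : E →L[ℂ] F}

theorem norm_adjoint_comp_le (hP : IsPolarPartner X W) : ‖W† ∘L X‖ ≤ ‖X‖ :=
  opNorm_le_bound _ (norm_nonneg _) fun u =>
    (hP.norm_adjoint_comp_apply u).trans_le (X.le_opNorm u)

theorem isUnit_one_add_smul (hP : IsPolarPartner X W) (hX : ‖X‖ < 1) {z : ℂ} (hz : ‖z‖ ≤ 1) :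
    IsUnit (1 + z • (W† ∘L X)) := by
  have : ‖-(z • (W† ∘L X))‖ < 1 := by
    rw [norm_neg, norm_smul]
    calc _ ≤ 1 * ‖X‖ := mul_le_mul hz hP.norm_adjoint_comp_le (norm_nonneg _) zero_le_one
      _ < 1 := by linarith
  simpa using (Units.oneSub _ this).isUnit

theorem norm_sq_add_smul_apply_add_defect (hP : IsPolarPartner X W) (z : ℂ) (u : E) :
    ‖(X + z • W) u‖ ^ 2 + (1 - ‖z‖ ^ 2) * (‖u‖ ^ 2 - ‖X u‖ ^ 2)
      + ‖z‖ ^ 2 * (‖u‖ ^ 2 - ‖W u‖ ^ 2) = ‖(1 + z • (W† ∘L X)) u‖ ^ 2 := by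
  have hinner : ⟪X u, W u⟫_ℂ = ⟪u, (W† ∘L X) u⟫_ℂ :=
    calc ⟪X u, W u⟫_ℂ = starRingEnd ℂ ⟪u, (W† ∘L X) u⟫_ℂ := by
          rw [ContinuousLinearMap.comp_apply, adjoint_inner_right, inner_conj_symm]
      _ = ⟪(W† ∘L X) u, u⟫_ℂ := inner_conj_symm _ _
      _ = ⟪u, (W† ∘L X) u⟫_ℂ := hP.isSelfAdjoint.isSymmetric u u
  simp only [_root_.add_apply, _root_.smul_apply, one_apply_eq_self, @norm_add_sq ℂ, norm_smul,
    inner_smul_right, mul_pow, hinner, hP.norm_adjoint_comp_apply]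
  ring

theorem norm_sq_add_smul_apply_le (hP : IsPolarPartner X W) {z : ℂ} (hz : ‖z‖ ≤ 1) (u : E) :
    ‖(X + z • W) u‖ ^ 2
      ≤ ‖(1 + z • (W† ∘L X)) u‖ ^ 2 - (1 - ‖z‖ ^ 2) * (1 - ‖X‖ ^ 2) * ‖u‖ ^ 2 := by
  have hXu : ‖X u‖ ^ 2 ≤ ‖X‖ ^ 2 * ‖u‖ ^ 2 := by
    rw [← mul_pow]; exact pow_le_pow_left₀ (norm_nonneg _) (X.le_opNorm u) 2
  have hWu : ‖W u‖ ^ 2 ≤ ‖u‖ ^ 2 :=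
    pow_le_pow_left₀ (norm_nonneg _) ((W.le_opNorm u).trans
      (mul_le_of_le_one_left (norm_nonneg u) hP.norm_le_one)) 2
  have hz2 : ‖z‖ ^ 2 ≤ 1 := pow_le_one₀ (norm_nonneg z) hz
  nlinarith [hP.norm_sq_add_smul_apply_add_defect z u,
    mul_le_mul_of_nonneg_left hXu (sub_nonneg.mpr hz2),
    mul_le_mul_of_nonneg_left hWu (sq_nonneg ‖z‖)]

theorem norm_sq_mobiusPath_apply_le (hP : IsPolarPartner X W) (hX : ‖X‖ < 1) {z : ℂ}
    (hz : ‖z‖ ≤ 1) (y : E) :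
    ‖mobiusPath X W z y‖ ^ 2 ≤ (1 - (1 - ‖z‖ ^ 2) * (1 - ‖X‖ ^ 2) / 4) * ‖y‖ ^ 2 := by
  have hunit := hP.isUnit_one_add_smul hX hz
  obtain ⟨u, rfl⟩ : ∃ u, (1 + z • (W† ∘L X)) u = y :=
    ⟨Ring.inverse (1 + z • (W† ∘L X)) y, by
      rw [← mul_apply_eq_comp, Ring.mul_inverse_cancel _ hunit, one_apply_eq_self]⟩
  rw [mobiusPath_apply_one_add_smul hunit]
  have hy : ‖(1 + z • (W† ∘L X)) u‖ ≤ 2 * ‖u‖ :=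
    calc ‖(1 + z • (W† ∘L X)) u‖ ≤ ‖1 + z • (W† ∘L X)‖ * ‖u‖ := le_opNorm _ _
      _ ≤ 2 * ‖u‖ := by
        gcongr
        calc ‖1 + z • (W† ∘L X)‖ ≤ ‖(1 : E →L[ℂ] E)‖ + ‖z‖ * ‖W† ∘L X‖ :=
              (norm_add_le _ _).trans (by rw [norm_smul])
          _ ≤ 1 + 1 * 1 := by
            gcongr
            · exact norm_id_le
            · exact hP.norm_adjoint_comp_le.trans hX.le
          _ = 2 := by norm_num
  have hδ : 0 ≤ (1 - ‖z‖ ^ 2) * (1 - ‖X‖ ^ 2) :=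
    mul_nonneg (sub_nonneg.mpr (pow_le_one₀ (norm_nonneg z) hz))
      (sub_nonneg.mpr (pow_le_one₀ (norm_nonneg X) hX.le))
  nlinarith [hP.norm_sq_add_smul_apply_le hz u, mul_le_mul_of_nonneg_left
    (pow_le_pow_left₀ (norm_nonneg _) hy 2) hδ]

theorem norm_mobiusPath_le_one (hP : IsPolarPartner X W) (hX : ‖X‖ < 1) {z : ℂ}
    (hz : ‖z‖ ≤ 1) : ‖mobiusPath X W z‖ ≤ 1 := by
  refine (opNorm_le_sqrt (hP.norm_sq_mobiusPath_apply_le hX hz)).trans (Real.sqrt_le_one.mpr ?_)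
  have : 0 ≤ (1 - ‖z‖ ^ 2) * (1 - ‖X‖ ^ 2) :=
    mul_nonneg (sub_nonneg.mpr (pow_le_one₀ (norm_nonneg z) hz))
      (sub_nonneg.mpr (pow_le_one₀ (norm_nonneg X) hX.le))
  linarith

theorem norm_mobiusPath_lt_one (hP : IsPolarPartner X W) (hX : ‖X‖ < 1) {z : ℂ}
    (hz : ‖z‖ < 1) : ‖mobiusPath X W z‖ < 1 := by
  refine (opNorm_le_sqrt (hP.norm_sq_mobiusPath_apply_le hX hz.le)).trans_lt
    ((Real.sqrt_lt' one_pos).mpr ?_)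
  have : 0 < (1 - ‖z‖ ^ 2) * (1 - ‖X‖ ^ 2) :=
    mul_pos (sub_pos.mpr (pow_lt_one₀ (norm_nonneg z) hz two_ne_zero))
      (sub_pos.mpr (pow_lt_one₀ (norm_nonneg X) hX two_ne_zero))
  linarith

theorem isometricOnDimGE_mobiusPath (hP : IsPolarPartner X W) (hX : ‖X‖ < 1) {z : ℂ}
    (hz : ‖z‖ = 1) {q : ℕ} (hW : W.IsometricOnDimGE q) :
    (mobiusPath X W z).IsometricOnDimGE q := by
  obtain ⟨S, hS, hWS⟩ := hW
  set T := 1 + z • (W† ∘L X)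
  have hunit : IsUnit T := hP.isUnit_one_add_smul hX hz.le
  have hinj : Function.Injective T := fun a b hab => by
    simpa [← mul_apply_eq_comp, Ring.inverse_mul_cancel _ hunit] using
      congrArg (⇑(Ring.inverse T)) hab
  refine ⟨S.map (T : E →ₗ[ℂ] E), ?_, ?_⟩
  · rwa [← (Submodule.equivMapOfInjective (T : E →ₗ[ℂ] E) hinj S).finrank_eq]
  · rintro _ ⟨u, hu, rfl⟩
    have h := hP.norm_sq_add_smul_apply_add_defect z u
    rw [hz, hWS u hu] at h
    simp only [one_pow, sub_self, zero_mul, mul_zero, add_zero] at h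
    rw [ContinuousLinearMap.coe_coe, mobiusPath_apply_one_add_smul hunit]
    exact (pow_left_inj₀ (norm_nonneg _) (norm_nonneg _) two_ne_zero).mp h

theorem diffContOnCl_comp_mobiusPath {G : Type*} [NormedAddCommGroup G] [NormedSpace ℂ G]
    (hP : IsPolarPartner X W) (hX : ‖X‖ < 1) {f : (E →L[ℂ] F) → G}
    (hc : ContinuousOn f (closedBall 0 1)) (hd : DifferentiableOn ℂ f (ball 0 1)) :
    DiffContOnCl ℂ (f ∘ mobiusPath X W) (ball 0 1) := by
  have hφ : ∀ z ∈ closedBall (0 : ℂ) 1, DifferentiableAt ℂ (mobiusPath X W) z := fun z hz =>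
    differentiableAt_mobiusPath (hP.isUnit_one_add_smul hX (mem_closedBall_zero_iff.mp hz))
  refine ⟨fun z hz => ?_, ?_⟩
  · have hφz : mobiusPath X W z ∈ ball 0 1 :=
      mem_ball_zero_iff.mpr (hP.norm_mobiusPath_lt_one hX (mem_ball_zero_iff.mp hz))
    exact ((hd.differentiableAt (isOpen_ball.mem_nhds hφz)).comp z
      (hφ z (ball_subset_closedBall hz))).differentiableWithinAt
  · rw [closure_ball _ one_ne_zero]
    exact hc.comp (fun z hz => (hφ z hz).continuousAt.continuousWithinAt) fun z hz =>
      mem_closedBall_zero_iff.mpr (hP.norm_mobiusPath_le_one hX (mem_closedBall_zero_iff.mp hz))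

end IsPolarPartner

end PolarPartner

theorem ContinuousLinearMap.norm_sqrt_adjoint_comp_self_apply [CompleteSpace E] [CompleteSpace F]
    (Y : F →L[ℂ] E) (x : F) : ‖CFC.sqrt (Y† ∘L Y) x‖ = ‖Y x‖ := by
  set A := CFC.sqrt (Y† ∘L Y)
  have hY : 0 ≤ Y† ∘L Y := (nonneg_iff_isPositive _).mpr Y.isPositive_adjoint_comp_self
  have hA : A† ∘L A = Y† ∘L Y := by
    rw [isSelfAdjoint_iff'.mp (IsSelfAdjoint.of_nonneg (CFC.sqrt_nonneg _))]
    exact CFC.sqrt_mul_sqrt_self _ hY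
  rw [← sq_eq_sq₀ (norm_nonneg _) (norm_nonneg _), A.apply_norm_sq_eq_inner_adjoint_left, hA,
    Y.apply_norm_sq_eq_inner_adjoint_left]

theorem ContinuousLinearMap.exists_polarDecomposition_of_finrank_le [FiniteDimensional ℂ E]
    [FiniteDimensional ℂ F] (h : finrank ℂ F ≤ finrank ℂ E) (Y : F →L[ℂ] E) :
    ∃ (V : F →ₗᵢ[ℂ] E) (A : F →L[ℂ] F), IsSelfAdjoint A ∧ ∀ x, V (A x) = Y x := by
  obtain ⟨κ⟩ := LinearIsometry.nonempty_of_finrank_le h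
  set A := CFC.sqrt (Y† ∘L Y)
  obtain ⟨U, hU⟩ := LinearIsometry.exists_comp_eq_of_norm_eq
    (B := κ.toLinearMap ∘ₗ (A : F →ₗ[ℂ] F)) (Y := (Y : F →ₗ[ℂ] E))
    fun x => by simpa using Y.norm_sqrt_adjoint_comp_self_apply x
  exact ⟨U.comp κ, A, IsSelfAdjoint.of_nonneg (CFC.sqrt_nonneg _), hU⟩

open ContinuousLinearMap in
theorem exists_isPolarPartner [FiniteDimensional ℂ E] [FiniteDimensional ℂ F] (X : E →L[ℂ] F) :
    ∃ W, IsPolarPartner X W ∧ W.IsometricOnDimGE (min (finrank ℂ E) (finrank ℂ F)) := by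
  rcases le_total (finrank ℂ E) (finrank ℂ F) with h | h
  · obtain ⟨V, A, hA, hVA⟩ := X.exists_polarDecomposition_of_finrank_le h
    have hW : V.toContinuousLinearMap† ∘L X = A := by
      rw [show X = V.toContinuousLinearMap ∘L A from ext fun x => (hVA x).symm, ← comp_assoc,
        V.adjoint_comp_self, one_def, id_comp]
    refine ⟨V.toContinuousLinearMap, ⟨V.norm_toContinuousLinearMap_le, hW ▸ hA, fun u => ?_⟩,
      ⊤, by simp, fun y _ => V.norm_map y⟩
    rw [hW, ← hVA]
    exact (V.norm_map _).symm
  · -- decompose `X† = V A` instead, and take `W = V†`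
    obtain ⟨V, A, hA, hVA⟩ := X†.exists_polarDecomposition_of_finrank_le h
    have hX : X = A ∘L V.toContinuousLinearMap† := by
      rw [← adjoint_adjoint X, show X† = V.toContinuousLinearMap ∘L A from
        ext fun x => (hVA x).symm, adjoint_comp, isSelfAdjoint_iff'.mp hA]
    refine ⟨V.toContinuousLinearMap†, ⟨?_, ?_, fun u => ?_⟩, LinearMap.range V.toLinearMap, ?_, ?_⟩
    · rw [LinearIsometryEquiv.norm_map]
      exact V.norm_toContinuousLinearMap_le
    · rw [adjoint_adjoint, isSelfAdjoint_iff', hX, adjoint_comp, adjoint_comp, adjoint_adjoint,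
        isSelfAdjoint_iff'.mp hA, comp_assoc]
    · simp
    · rw [LinearMap.finrank_range_of_inj V.injective]
      exact min_le_right _ _
    · rintro _ ⟨x, rfl⟩
      have hx : (V.toContinuousLinearMap†) (V x) = x := congr($(V.adjoint_comp_self) x)
      change ‖(V.toContinuousLinearMap†) (V x)‖ = ‖V x‖
      rw [hx, V.norm_map]

theorem norm_le_of_forall_isometricOnDimGE_norm_le [FiniteDimensional ℂ E] [FiniteDimensional ℂ F]
    {G : Type*} [NormedAddCommGroup G] [NormedSpace ℂ G] {f : (E →L[ℂ] F) → G}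
    (hc : ContinuousOn f (closedBall 0 1)) (hd : DifferentiableOn ℂ f (ball 0 1)) {q : ℕ}
    (hq : q ≤ min (finrank ℂ E) (finrank ℂ F)) {C : ℝ}
    (hC : ∀ U : E →L[ℂ] F, ‖U‖ ≤ 1 → U.IsometricOnDimGE q → ‖f U‖ ≤ C)
    {X : E →L[ℂ] F} (hX : ‖X‖ ≤ 1) : ‖f X‖ ≤ C := by
  have hball : ∀ X : E →L[ℂ] F, ‖X‖ < 1 → ‖f X‖ ≤ C := by
    intro X hX
    obtain ⟨W, hP, S, hS, hWS⟩ := exists_isPolarPartner X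
    have hφ := Complex.norm_le_of_forall_mem_frontier_norm_le isBounded_ball
      (hP.diffContOnCl_comp_mobiusPath hX hc hd) (C := C) (fun z hz => by
        rw [frontier_ball _ one_ne_zero, mem_sphere_zero_iff_norm] at hz
        exact hC _ (hP.norm_mobiusPath_le_one hX hz.le)
          (hP.isometricOnDimGE_mobiusPath hX hz ⟨S, hq.trans hS, hWS⟩))
      (subset_closure (mem_ball_self one_pos))
    rwa [Function.comp_apply, mobiusPath_zero] at hφ
  have hXc : X ∈ closure (ball (0 : E →L[ℂ] F) 1) := by
    rwa [closure_ball _ one_ne_zero, mem_closedBall_zero_iff]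
  exact ContinuousWithinAt.closure_le hXc
    ((hc X (mem_closedBall_zero_iff.mpr hX)).norm.mono ball_subset_closedBall)
    continuousWithinAt_const fun Y hY => hball Y (mem_ball_zero_iff.mp hY)

theorem EuclideanSpace.star_dotProduct_self {𝕜 ι : Type*} [RCLike 𝕜] [Fintype ι]
    (x : EuclideanSpace 𝕜 ι) : star x.ofLp ⬝ᵥ x.ofLp = (‖x‖ : 𝕜) ^ 2 := by
  rw [dotProduct_comm, ← EuclideanSpace.inner_eq_star_dotProduct, inner_self_eq_norm_sq_to_K]

namespace Matrix

variable {𝕜 : Type*} [RCLike 𝕜] {m n : Type*} [Fintype m] [Fintype n] [DecidableEq n]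

variable (𝕜) in
noncomputable def toEuclideanCLMₗᵢ :
    Matrix m n 𝕜 ≃ₗᵢ[𝕜] (EuclideanSpace 𝕜 n →L[𝕜] EuclideanSpace 𝕜 m) :=
  { toLinearEquiv := toEuclideanLin.trans LinearMap.toContinuousLinearMap
    norm_map' := fun A => (l2_opNorm_def A).symm }

theorem toEuclideanCLMₗᵢ_apply (A : Matrix m n 𝕜) (x : EuclideanSpace 𝕜 n) :
    toEuclideanCLMₗᵢ 𝕜 A x = WithLp.toLp 2 (A *ᵥ x.ofLp) := rfl

end Matrix

theorem isometricOnDimGE_of_toEuclideanCLMₗᵢ {p r : ℕ} {U : Matrix (Fin p) (Fin r) ℂ} {q : ℕ}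
    (h : (toEuclideanCLMₗᵢ ℂ U).IsometricOnDimGE q) : IsometricOnDimGE U q := by
  obtain ⟨S, hS, hUS⟩ := h
  refine ⟨S.map (WithLp.linearEquiv 2 ℂ (Fin r → ℂ) : EuclideanSpace ℂ (Fin r) →ₗ[ℂ] Fin r → ℂ),
    by rwa [LinearEquiv.finrank_map_eq], ?_⟩
  rintro _ ⟨x, hx, rfl⟩
  have key := EuclideanSpace.star_dotProduct_self (toEuclideanCLMₗᵢ ℂ U x)
  rwa [hUS x hx, ← EuclideanSpace.star_dotProduct_self, toEuclideanCLMₗᵢ_apply] at key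

/-- The maximum modulus principle over the sets `𝒰_k`: for `f` continuous on the closed
unit ball of `ℂ^{Ng'×Ng}` and holomorphic on its interior, and `0 < k ≤ min g' g`,
`‖f(X)‖` is bounded by the supremum of `‖f‖` over contractions isometric on a subspace
of dimension at least `Nk`. -/
theorem norm_le_sup_over_partial_isometries (N g' g d' d : ℕ)
    (f : Matrix (Fin (N * g')) (Fin (N * g)) ℂ → Matrix (Fin d') (Fin d) ℂ)
    (hc : ContinuousOn f {X | ‖X‖ ≤ 1})
    (hdiff : DifferentiableOn ℂ f {X | ‖X‖ < 1}) :
    ∀ k : ℕ, 0 < k → k ≤ min g' g →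
    ∀ X : Matrix (Fin (N * g')) (Fin (N * g)) ℂ, ‖X‖ ≤ 1 →
      ‖f X‖ ≤ sSup ((fun U => ‖f U‖) '' {U | ‖U‖ ≤ 1 ∧ IsometricOnDimGE U (N * k)}) := by
  intro k _ hk X hX
  let e := toEuclideanCLMₗᵢ ℂ (m := Fin (N * g')) (n := Fin (N * g))
  have hbdd : BddAbove ((fun U => ‖f U‖) '' {U | ‖U‖ ≤ 1 ∧ IsometricOnDimGE U (N * k)}) :=
    ((isCompact_closedBall 0 1).image_of_continuousOn (hc.mono fun U hU =>
      mem_closedBall_zero_iff.mp hU).norm).bddAbove.mono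
      (Set.image_mono fun U hU => mem_closedBall_zero_iff.mpr hU.1)
  have hq : N * k ≤ min (finrank ℂ (EuclideanSpace ℂ (Fin (N * g))))
      (finrank ℂ (EuclideanSpace ℂ (Fin (N * g')))) := by
    rw [finrank_euclideanSpace_fin, finrank_euclideanSpace_fin]
    exact le_min (Nat.mul_le_mul_left N (hk.trans (min_le_right _ _)))
      (Nat.mul_le_mul_left N (hk.trans (min_le_left _ _)))
  have hfe : ContinuousOn (f ∘ e.symm) (closedBall 0 1) :=
    hc.comp e.symm.continuous.continuousOn fun T hT => by simpa using hT
  have hfe' : DifferentiableOn ℂ (f ∘ e.symm) (ball 0 1) :=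
    hdiff.comp e.symm.toLinearIsometry.toContinuousLinearMap.differentiableOn fun T hT => by
      simpa using hT
  simpa [e] using norm_le_of_forall_isometricOnDimGE_norm_le hfe hfe' hq
    (fun T hT hTq => le_csSup hbdd ⟨e.symm T, ⟨by simpa using hT,
      isometricOnDimGE_of_toEuclideanCLMₗᵢ (by rwa [e.apply_symm_apply])⟩, rfl⟩)
    (X := e X) (by simpa using hX)
end

section
/- Fix N, g', g, d', d ∈ ℕ with g' ≥ g, and let B denote the closed unit ball {X ∈ ℂ^{Ng'×Ng} : ‖X‖ ≤ 1} in the operator norm. Let f: B → ℂ^{d'×d} be continuous on B and holomorphic (complex differentiable) on the open ball {‖X‖ < 1}. If f(X) = 0 for every X ∈ B with X*X = I_{Ng} (i.e., f vanishes on all isometries in B), then f vanishes identically on B. -/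
/-!
For a strict contraction `X` with `Xᴴ X` positive definite, diagonalize `Xᴴ X = U diag(sᵢ²) Uᴴ`
with `0 < sᵢ < 1` and put `Y(z) = X U diag(bᵢ(z) / sᵢ) Uᴴ`, where `bᵢ(z) = (z + sᵢ) / (1 + sᵢ z)`
is the Blaschke factor with `bᵢ(0) = sᵢ`. Then `Y(0) = X` and `Y(z)ᴴ Y(z) = U diag(|bᵢ(z)|²) Uᴴ`,
so `Y` is a holomorphic disc in the closed matrix ball whose boundary circle consists of
isometries, and the maximum modulus principle for `f ∘ Y` gives `f X = 0`.

Since `g ≤ g'` there is an isometry `E`, and `Eᴴ (X + t E) = Eᴴ X + t` is invertible for all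
but finitely many `t`. Hence such `X` are dense in the closed ball, and `f = 0` by continuity.
-/

open scoped Matrix.Norms.L2Operator ComplexOrder Topology
open Matrix

noncomputable def blaschke (s : ℝ) (z : ℂ) : ℂ := (z + s) / (1 + s * z)

section Blaschke

variable {s : ℝ} {z : ℂ}

lemma one_add_mul_ne_zero_of_abs_lt (hs : |s| < 1) (hz : ‖z‖ ≤ 1) : (1 : ℂ) + s * z ≠ 0 := by
  intro h
  have h1 : ‖(s : ℂ) * z‖ = 1 := by simp [eq_neg_of_add_eq_zero_right h]
  rw [norm_mul, Complex.norm_real, Real.norm_eq_abs] at h1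
  nlinarith [abs_nonneg s, norm_nonneg z]

lemma sq_norm_add_sub_sq_norm_one_add_mul (s : ℝ) (z : ℂ) :
    ‖z + s‖ ^ 2 - ‖1 + s * z‖ ^ 2 = (1 - s ^ 2) * (‖z‖ ^ 2 - 1) := by
  simp only [Complex.sq_norm, Complex.normSq_apply, Complex.add_re, Complex.add_im,
    Complex.mul_re, Complex.mul_im, Complex.ofReal_re, Complex.ofReal_im, Complex.one_re,
    Complex.one_im]
  ring

lemma norm_blaschke_lt_one (hs : |s| < 1) (hz : ‖z‖ < 1) : ‖blaschke s z‖ < 1 := by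
  have hden := norm_pos_iff.2 (one_add_mul_ne_zero_of_abs_lt hs hz.le)
  rw [blaschke, norm_div, div_lt_one hden, ← sq_lt_sq₀ (norm_nonneg _) hden.le, ← sub_neg,
    sq_norm_add_sub_sq_norm_one_add_mul]
  have : s ^ 2 < 1 := by rwa [sq_lt_one_iff_abs_lt_one]
  exact mul_neg_of_pos_of_neg (by linarith) (by nlinarith [norm_nonneg z])

lemma norm_blaschke_le_one (hs : |s| < 1) (hz : ‖z‖ ≤ 1) : ‖blaschke s z‖ ≤ 1 := by
  have hden := norm_pos_iff.2 (one_add_mul_ne_zero_of_abs_lt hs hz)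
  rw [blaschke, norm_div, div_le_one hden, ← sq_le_sq₀ (norm_nonneg _) hden.le, ← sub_nonpos,
    sq_norm_add_sub_sq_norm_one_add_mul]
  have : s ^ 2 < 1 := by rwa [sq_lt_one_iff_abs_lt_one]
  exact mul_nonpos_of_nonneg_of_nonpos (by linarith) (by nlinarith [norm_nonneg z])

lemma norm_blaschke_of_norm_eq_one (hs : |s| < 1) (hz : ‖z‖ = 1) : ‖blaschke s z‖ = 1 := by
  have hden := norm_pos_iff.2 (one_add_mul_ne_zero_of_abs_lt hs hz.le)
  rw [blaschke, norm_div, div_eq_one_iff_eq hden.ne', ← sq_eq_sq₀ (norm_nonneg _) hden.le,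
    ← sub_eq_zero, sq_norm_add_sub_sq_norm_one_add_mul, hz]
  ring

@[simp]
lemma blaschke_zero (s : ℝ) : blaschke s 0 = s := by simp [blaschke]

lemma differentiableAt_blaschke (hs : |s| < 1) (hz : ‖z‖ ≤ 1) :
    DifferentiableAt ℂ (blaschke s) z :=
  (differentiableAt_id.add_const _).div ((differentiableAt_id.const_mul _).const_add _)
    (one_add_mul_ne_zero_of_abs_lt hs hz)

end Blaschke

def Matrix.diagonalStarAlgHom (n : Type*) [Fintype n] [DecidableEq n] :
    (n → ℂ) →⋆ₐ[ℂ] Matrix n n ℂ :=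
  { diagonalAlgHom ℂ with map_star' := fun v => (diagonal_conjTranspose v).symm }

namespace Matrix.IsHermitian

variable {n : Type*} [Fintype n] [DecidableEq n] {A : Matrix n n ℂ}

noncomputable def spectralHom (hA : A.IsHermitian) : (n → ℂ) →⋆ₐ[ℂ] Matrix n n ℂ :=
  (Unitary.conjStarAlgAut ℂ _ hA.eigenvectorUnitary : Matrix n n ℂ →⋆ₐ[ℂ] Matrix n n ℂ).comp
    (diagonalStarAlgHom n)

lemma spectralHom_injective (hA : A.IsHermitian) : Function.Injective hA.spectralHom :=
  (Unitary.conjStarAlgAut ℂ _ hA.eigenvectorUnitary).injective.comp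
    fun _ _ h => diagonal_injective h

lemma spectralHom_eigenvalues (hA : A.IsHermitian) :
    hA.spectralHom (fun i => (hA.eigenvalues i : ℂ)) = A :=
  hA.spectral_theorem.symm

lemma norm_spectralHom (hA : A.IsHermitian) (v : n → ℂ) : ‖hA.spectralHom v‖ = ‖v‖ :=
  NonUnitalStarAlgHom.norm_map _ hA.spectralHom_injective v

lemma abs_eigenvalues_le (hA : A.IsHermitian) (i : n) : |hA.eigenvalues i| ≤ ‖A‖ := by
  conv_rhs => rw [← hA.spectralHom_eigenvalues, norm_spectralHom]
  simpa using norm_le_pi_norm (fun i => (hA.eigenvalues i : ℂ)) i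

end Matrix.IsHermitian

section BlaschkeDisc

variable {m n : Type*} [Fintype m] [Fintype n] [DecidableEq n] {X : Matrix m n ℂ} {z : ℂ}

lemma eigenvalues_conjTranspose_mul_self_lt_one (hX : (Xᴴ * X).IsHermitian) (hX1 : ‖X‖ < 1)
    (i : n) : hX.eigenvalues i < 1 :=
  calc hX.eigenvalues i ≤ ‖Xᴴ * X‖ := (le_abs_self _).trans (hX.abs_eigenvalues_le i)
    _ = ‖X‖ * ‖X‖ := l2_opNorm_conjTranspose_mul_self X
    _ < 1 := mul_lt_one_of_nonneg_of_lt_one_left (norm_nonneg X) hX1 hX1.le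

noncomputable def singularValues (hX : (Xᴴ * X).IsHermitian) (i : n) : ℝ := √(hX.eigenvalues i)

noncomputable def blaschkeDisc (hX : (Xᴴ * X).IsHermitian) (z : ℂ) : Matrix m n ℂ :=
  X * hX.spectralHom fun i => blaschke (singularValues hX i) z / singularValues hX i

lemma singularValues_pos (hX : (Xᴴ * X).PosDef) (i : n) : 0 < singularValues hX.1 i :=
  Real.sqrt_pos.2 (hX.eigenvalues_pos i)

lemma sq_singularValues (hX : (Xᴴ * X).PosDef) (i : n) :
    singularValues hX.1 i ^ 2 = hX.1.eigenvalues i :=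
  Real.sq_sqrt (hX.eigenvalues_pos i).le

lemma abs_singularValues_lt_one (hX : (Xᴴ * X).PosDef) (hX1 : ‖X‖ < 1) (i : n) :
    |singularValues hX.1 i| < 1 := by
  rw [abs_of_pos (singularValues_pos hX i), singularValues, Real.sqrt_lt' one_pos, one_pow]
  exact eigenvalues_conjTranspose_mul_self_lt_one hX.1 hX1 i

lemma blaschkeDisc_zero (hX : (Xᴴ * X).PosDef) : blaschkeDisc hX.1 0 = X := by
  have hs : ∀ i, (singularValues hX.1 i : ℂ) ≠ 0 :=
    fun i => Complex.ofReal_ne_zero.2 (singularValues_pos hX i).ne'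
  simp [blaschkeDisc, div_self (hs _), ← Pi.one_def]

lemma conjTranspose_blaschkeDisc_mul_self (hX : (Xᴴ * X).PosDef) (z : ℂ) :
    (blaschkeDisc hX.1 z)ᴴ * blaschkeDisc hX.1 z =
      hX.1.spectralHom fun i => ((‖blaschke (singularValues hX.1 i) z‖ ^ 2 : ℝ) : ℂ) := by
  rw [blaschkeDisc, conjTranspose_mul, ← star_eq_conjTranspose, ← map_star, Matrix.mul_assoc,
    ← Matrix.mul_assoc Xᴴ]
  conv_lhs => enter [2, 1]; rw [← hX.1.spectralHom_eigenvalues]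
  rw [← map_mul, ← map_mul]
  congr 1
  funext i
  have hs : (singularValues hX.1 i : ℂ) ≠ 0 :=
    Complex.ofReal_ne_zero.2 (singularValues_pos hX i).ne'
  simp only [Pi.mul_apply, Pi.star_apply, star_div₀, ← sq_singularValues hX, Complex.star_def,
    Complex.conj_ofReal]
  push_cast
  rw [← Complex.conj_mul']
  field_simp

lemma sq_norm_blaschkeDisc (hX : (Xᴴ * X).PosDef) (z : ℂ) :
    ‖blaschkeDisc hX.1 z‖ ^ 2 =
      ‖fun i => ((‖blaschke (singularValues hX.1 i) z‖ ^ 2 : ℝ) : ℂ)‖ := by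
  rw [sq, ← l2_opNorm_conjTranspose_mul_self, conjTranspose_blaschkeDisc_mul_self hX,
    IsHermitian.norm_spectralHom]

lemma norm_blaschkeDisc_lt_one (hX : (Xᴴ * X).PosDef) (hX1 : ‖X‖ < 1) (hz : ‖z‖ < 1) :
    ‖blaschkeDisc hX.1 z‖ < 1 := by
  rw [← sq_lt_one_iff₀ (norm_nonneg _), sq_norm_blaschkeDisc hX, pi_norm_lt_iff one_pos]
  intro i
  simpa using norm_blaschke_lt_one (abs_singularValues_lt_one hX hX1 i) hz

lemma norm_blaschkeDisc_le_one (hX : (Xᴴ * X).PosDef) (hX1 : ‖X‖ < 1) (hz : ‖z‖ ≤ 1) :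
    ‖blaschkeDisc hX.1 z‖ ≤ 1 := by
  rw [← sq_le_one_iff₀ (norm_nonneg _), sq_norm_blaschkeDisc hX,
    pi_norm_le_iff_of_nonneg zero_le_one]
  intro i
  simpa using norm_blaschke_le_one (abs_singularValues_lt_one hX hX1 i) hz

lemma conjTranspose_blaschkeDisc_mul_self_of_norm_eq_one (hX : (Xᴴ * X).PosDef)
    (hX1 : ‖X‖ < 1) (hz : ‖z‖ = 1) : (blaschkeDisc hX.1 z)ᴴ * blaschkeDisc hX.1 z = 1 := by
  rw [conjTranspose_blaschkeDisc_mul_self hX]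
  simp [norm_blaschke_of_norm_eq_one (abs_singularValues_lt_one hX hX1 _) hz, ← Pi.one_def]

lemma differentiableAt_blaschkeDisc (hX : (Xᴴ * X).PosDef) (hX1 : ‖X‖ < 1) (hz : ‖z‖ ≤ 1) :
    DifferentiableAt ℂ (blaschkeDisc hX.1) z := by
  let L := (mulLeftLinearMap n ℂ X).comp hX.1.spectralHom.toLinearMap
  have hb : DifferentiableAt ℂ
      (fun z i => blaschke (singularValues hX.1 i) z / singularValues hX.1 i) z :=
    differentiableAt_pi.2 fun i =>
      (differentiableAt_blaschke (abs_singularValues_lt_one hX hX1 i) hz).div_const _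
  exact (LinearMap.toContinuousLinearMap L).differentiableAt.comp z hb

lemma eq_zero_of_posDef {F : Type*} [NormedAddCommGroup F] [NormedSpace ℂ F]
    {f : Matrix m n ℂ → F} (hc : ContinuousOn f {X | ‖X‖ ≤ 1})
    (hdiff : DifferentiableOn ℂ f {X | ‖X‖ < 1})
    (hvanish : ∀ X : Matrix m n ℂ, ‖X‖ ≤ 1 → Xᴴ * X = 1 → f X = 0)
    (hX : (Xᴴ * X).PosDef) (hX1 : ‖X‖ < 1) : f X = 0 := by
  have hdisc : DiffContOnCl ℂ (f ∘ blaschkeDisc hX.1) (Metric.ball 0 1) := by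
    refine ⟨fun z hz => ?_, ?_⟩
    · rw [mem_ball_zero_iff] at hz
      exact ((hdiff.differentiableAt ((isOpen_lt continuous_norm continuous_const).mem_nhds
        (norm_blaschkeDisc_lt_one hX hX1 hz))).comp z
          (differentiableAt_blaschkeDisc hX hX1 hz.le)).differentiableWithinAt
    · rw [closure_ball 0 one_ne_zero]
      refine hc.comp (fun z hz => ?_) fun z hz => ?_
      · rw [mem_closedBall_zero_iff] at hz
        exact (differentiableAt_blaschkeDisc hX hX1 hz).continuousAt.continuousWithinAt
      · exact norm_blaschkeDisc_le_one hX hX1 (mem_closedBall_zero_iff.1 hz)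
  have hcircle : Set.EqOn (f ∘ blaschkeDisc hX.1) (fun _ => 0) (frontier (Metric.ball 0 1)) := by
    rw [frontier_ball 0 one_ne_zero]
    intro z hz
    rw [mem_sphere_zero_iff_norm] at hz
    exact hvanish _ (norm_blaschkeDisc_le_one hX hX1 hz.le)
      (conjTranspose_blaschkeDisc_mul_self_of_norm_eq_one hX hX1 hz)
  simpa only [Function.comp_apply, blaschkeDisc_zero hX] using
    Complex.eqOn_of_eqOn_frontier Metric.isBounded_ball hdisc diffContOnCl_const hcircle
      (Metric.mem_ball_self one_pos)

end BlaschkeDisc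

section Density

variable {m n : Type*} [Fintype m] [Fintype n] [DecidableEq n] {E X : Matrix m n ℂ}

lemma injective_mulVec_add_smul (hE : Eᴴ * E = 1) {t : ℂ}
    (ht : t ∉ spectrum ℂ (-(Eᴴ * X))) : Function.Injective (X + t • E).mulVec := by
  rw [spectrum.notMem_iff, Algebra.algebraMap_eq_smul_one, sub_neg_eq_add,
    show t • (1 : Matrix n n ℂ) + Eᴴ * X = Eᴴ * (X + t • E) by
      rw [Matrix.mul_add, Matrix.mul_smul, hE, add_comm]] at ht
  refine Function.Injective.of_comp (f := Eᴴ.mulVec) ?_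
  simpa only [Function.comp_def, mulVec_mulVec] using mulVec_injective_iff_isUnit.2 ht

lemma setOf_norm_lt_one_subset_closure_posDef (hE : Eᴴ * E = 1) :
    {X : Matrix m n ℂ | ‖X‖ < 1} ⊆ closure {X | ‖X‖ < 1 ∧ (Xᴴ * X).PosDef} := by
  intro X hX
  set S := spectrum ℂ (-(Eᴴ * X))
  have : (𝓝[Sᶜ] (0 : ℂ)).NeBot :=
    mem_closure_iff_nhdsWithin_neBot.1 ((finite_spectrum _).countable.dense_compl ℂ 0)
  have hlim : Filter.Tendsto (fun t : ℂ => X + t • E) (𝓝[Sᶜ] 0) (𝓝 X) := by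
    refine Filter.Tendsto.mono_left ?_ nhdsWithin_le_nhds
    simpa using ((continuous_id.smul continuous_const).const_add X).tendsto (0 : ℂ)
  refine mem_closure_of_tendsto hlim ?_
  filter_upwards [self_mem_nhdsWithin,
    hlim ((isOpen_lt continuous_norm continuous_const).mem_nhds hX)] with t ht hnorm
  exact ⟨hnorm, PosDef.conjTranspose_mul_self _ (injective_mulVec_add_smul hE ht)⟩

end Density

lemma conjTranspose_mul_self_submatrix_one {m n R : Type*} [DecidableEq m] [Fintype m]
    [DecidableEq n] [Semiring R] [StarRing R] {e : n → m} (he : Function.Injective e) :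
    ((1 : Matrix m m R).submatrix id e)ᴴ * (1 : Matrix m m R).submatrix id e = 1 := by
  rw [conjTranspose_submatrix, conjTranspose_one, ← submatrix_mul _ _ _ _ _ Function.bijective_id,
    Matrix.one_mul]
  exact submatrix_one_embedding ⟨e, he⟩

/-- If `g' ≥ g` and `f` is continuous on the closed unit ball of `ℂ^{Ng'×Ng}`,
holomorphic on its interior, and vanishes on all isometries in the ball, then `f`
vanishes identically on the ball. -/
theorem eq_zero_of_vanishing_on_isometries (N g' g d' d : ℕ) (hgg : g ≤ g')
    (f : Matrix (Fin (N * g')) (Fin (N * g)) ℂ → Matrix (Fin d') (Fin d) ℂ)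
    (hc : ContinuousOn f {X | ‖X‖ ≤ 1})
    (hdiff : DifferentiableOn ℂ f {X | ‖X‖ < 1})
    (hvanish : ∀ X : Matrix (Fin (N * g')) (Fin (N * g)) ℂ, ‖X‖ ≤ 1 → Xᴴ * X = 1 → f X = 0) :
    ∀ X : Matrix (Fin (N * g')) (Fin (N * g)) ℂ, ‖X‖ ≤ 1 → f X = 0 := by
  have hE := conjTranspose_mul_self_submatrix_one (R := ℂ)
    (Fin.castLE_injective (Nat.mul_le_mul_left N hgg))
  have hdense : {X : Matrix (Fin (N * g')) (Fin (N * g)) ℂ | ‖X‖ ≤ 1} ⊆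
      closure {X | ‖X‖ < 1 ∧ (Xᴴ * X).PosDef} := by
    intro X hX
    refine closure_minimal (setOf_norm_lt_one_subset_closure_posDef hE) isClosed_closure ?_
    rwa [← ball_zero_eq, closure_ball 0 one_ne_zero, mem_closedBall_zero_iff]
  exact Set.EqOn.of_subset_closure (fun X hX => eq_zero_of_posDef hc hdiff hvanish hX.2 hX.1)
    hc continuousOn_const (fun X hX => hX.1.le) hdense
end
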